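/- arXiv:1801.00630 — 11 statements merged into one kernel-verified Lean document; each statement's English description precedes it below -/
import Mathlib

section
/- Let X be a pseudometric space and E ⊆ X × X. Then E is controlled (i.e. there exists r : ℝ with d x y ≤ r for all (x, y) ∈ E) if and only if every pair of points of *E is finitely close; concretely, if and only if for all f, g : ℕ → X such that (f n, g n) ∈ E for U-almost all n, the germ of f and the germ of g are finitely close. -/
open Filter

/-- The nonstandard extension `*S` of a type `S`, realised as germs along the
hyperfilter on `ℕ` (a nonprincipal ultrafilter). -/
abbrev St (S : Type*) : Type _ := Filter.Germ (↑(Filter.hyperfilter ℕ) : Filter ℕ) S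

/-- `*d`, the componentwise lift of the distance to the nonstandard extension. -/
noncomputable def starDist {X : Type*} [PseudoMetricSpace X] (x y : St X) : St ℝ :=
  Filter.Germ.map₂ dist x y

/-- `x ∼ y` : two points of `*X` are finitely close if `*d x y ≤ *r` for some real `r`. -/
def FinClose {X : Type*} [PseudoMetricSpace X] (x y : St X) : Prop :=
  ∃ r : ℝ, starDist x y ≤ (↑r : St ℝ)

/-- `FIN(X,ξ)` : the points of `*X` finitely close to the base point. -/
def FIN {X : Type*} [PseudoMetricSpace X] (ξ : X) : Set (St X) :=
  {x | FinClose x (↑ξ : St X)}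

/-- `INF(X,ξ)` : the infinite points of `*X` relative to the base point. -/
def INF {X : Type*} [PseudoMetricSpace X] (ξ : X) : Set (St X) :=
  {x | ¬ FinClose x (↑ξ : St X)}

/-- A subset of a pseudometric space is bounded. -/
def BoundedSet {X : Type*} [PseudoMetricSpace X] (B : Set X) : Prop :=
  ∃ r : ℝ, ∀ a ∈ B, ∀ b ∈ B, dist a b ≤ r

/-- A map of pseudometric spaces is bornologous. -/
def Bornologous {X Y : Type*} [PseudoMetricSpace X] [PseudoMetricSpace Y] (f : X → Y) : Prop :=
  ∀ r : ℝ, ∃ s : ℝ, ∀ x x' : X, dist x x' ≤ r → dist (f x) (f x') ≤ s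

/-- `f` is proper at the base point `η`: preimages of bounded sets containing `η`
are bounded. -/
def ProperAt {X Y : Type*} [PseudoMetricSpace X] [PseudoMetricSpace Y]
    (f : X → Y) (η : Y) : Prop :=
  ∀ B : Set Y, η ∈ B → BoundedSet B → BoundedSet (f ⁻¹' B)

/-- `(N, s)` is an internal hyperfinite chain in `B ⊆ *X` from `x` to `y`. -/
def InternalChain {X : Type*} [PseudoMetricSpace X] (B : Set (St X)) (x y : St X)
    (N : ℕ → ℕ) (s : ℕ → ℕ → X) : Prop :=
  (↑(fun n => s n 0) : St X) = x ∧
  (↑(fun n => s n (N n)) : St X) = y ∧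
  (∀ g : ℕ → ℕ, (∀ᶠ n in (↑(Filter.hyperfilter ℕ) : Filter ℕ), g n ≤ N n) →
    (↑(fun n => s n (g n)) : St X) ∈ B) ∧
  (∀ g : ℕ → ℕ, (∀ᶠ n in (↑(Filter.hyperfilter ℕ) : Filter ℕ), g n < N n) →
    FinClose (↑(fun n => s n (g n)) : St X) (↑(fun n => s n (g n + 1)) : St X))

/-- `B ⊆ *X` is macrochain-connected. -/
def MacroChainConnected {X : Type*} [PseudoMetricSpace X] (B : Set (St X)) : Prop :=
  ∀ x ∈ B, ∀ y ∈ B, ∃ N s, InternalChain B x y N s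

/-- `x ≡ι y` : `x` and `y` are joined by an internal hyperfinite chain lying in `INF(X,ξ)`. -/
def IotaEquiv {X : Type*} [PseudoMetricSpace X] (ξ : X) (x y : St X) : Prop :=
  ∃ N s, InternalChain (INF ξ) x y N s

/-- An element of `*ℕ` is infinite. -/
def InfiniteHypernat (i : St ℕ) : Prop := ∀ m : ℕ, ¬ i ≤ (↑m : St ℕ)

/-- A coarse sequence : a bornologous and proper map `ℕ → X`. -/
def CoarseSeq {X : Type*} [PseudoMetricSpace X] (s : ℕ → X) : Prop :=
  (∀ k : ℕ, ∃ r : ℝ, ∀ m n : ℕ, Nat.dist m n ≤ k → dist (s m) (s n) ≤ r) ∧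
  (∀ B : Set X, BoundedSet B → (s ⁻¹' B).Finite)

/-- `s ⊑ t` for coarse sequences : `s` is a subsequence of `t`. -/
def SubCoarse {X : Type*} [PseudoMetricSpace X] (s t : ℕ → X) : Prop :=
  CoarseSeq s ∧ CoarseSeq t ∧ ∃ κ : ℕ → ℕ, StrictMono κ ∧ s = t ∘ κ

/-- `s ≡σ t` : the equivalence relation generated by `⊑` on coarse sequences. -/
def SigmaEquiv {X : Type*} [PseudoMetricSpace X] (s t : ℕ → X) : Prop :=
  Relation.EqvGen SubCoarse s t

/-- `(X, ξ)` is non-scattering at infinity. -/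
def NonScattering {X : Type*} [PseudoMetricSpace X] (ξ : X) : Prop :=
  ∃ r : ℝ, ∀ A : Set X, ξ ∈ A → BoundedSet A →
    ∀ x ∈ Aᶜ, ∀ y ∈ Aᶜ, ∃ n : ℕ, ∃ c : ℕ → X, c 0 = x ∧ c n = y ∧
      (∀ i ≤ n, c i ∈ Aᶜ) ∧ (∀ i < n, dist (c i) (c (i + 1)) ≤ r)

theorem finClose_coe_iff {X : Type*} [PseudoMetricSpace X] {f g : ℕ → X} :
    FinClose (↑f : St X) (↑g : St X) ↔
      ∃ r : ℝ, ∀ᶠ n in (↑(Filter.hyperfilter ℕ) : Filter ℕ), dist (f n) (g n) ≤ r := by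
  simp only [FinClose, starDist, Germ.map₂_coe]
  exact exists_congr fun r => Germ.coe_le

/-- A relation `E` on a pseudometric space is controlled iff every pair of points of
`*E` is finitely close. -/
theorem controlled_iff_finClose {X : Type*} [PseudoMetricSpace X] (E : Set (X × X)) :
    (∃ r : ℝ, ∀ p ∈ E, dist p.1 p.2 ≤ r) ↔
      ∀ f g : ℕ → X,
        (∀ᶠ n in (↑(Filter.hyperfilter ℕ) : Filter ℕ), (f n, g n) ∈ E) →
        FinClose (↑f : St X) (↑g : St X) := by
  constructor
  · rintro ⟨r, hr⟩ f g hfg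
    exact finClose_coe_iff.2 ⟨r, hfg.mono fun n hn => hr _ hn⟩
  · intro h
    -- Otherwise points `p n ∈ E` at distance `> n` give a pair of germs at infinite distance.
    by_contra! hc
    choose p hpE hpd using hc
    obtain ⟨r, hr⟩ := finClose_coe_iff.1
      (h (fun n => (p n).1) (fun n => (p n).2) (.of_forall fun n => hpE n))
    have hdist : Tendsto (fun n : ℕ => dist (p n).1 (p n).2) atTop atTop :=
      tendsto_atTop_mono (fun n => (hpd n).le) tendsto_natCast_atTop_atTop
    obtain ⟨n, hle, hgt⟩ :=
      (hr.and ((hdist.mono_left Nat.hyperfilter_le_atTop).eventually_gt_atTop r)).exists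
    exact hle.not_gt hgt
end

section
/- Let X and Y be pseudometric spaces, f : X → Y a map, and ξ : X, η : Y base points with f ξ = η. Then f is proper at the base point (the preimage of every bounded subset of Y containing η is bounded in X) if and only if the preimage of FIN(Y,η) under *f is contained in FIN(X,ξ), i.e. for every x : *X, *f x ∈ FIN(Y,η) implies x ∈ FIN(X,ξ). -/
open Filter

/-!
A set `S ⊆ X` is bounded iff every point of `*X` whose components eventually lie in `S` is
finitely close to a base point `ξ` (any one will do): if `S` is unbounded, pick `u n ∈ S` with
`dist (u n) ξ > n`; since the hyperfilter is nonprincipal, `*d (*u) (*ξ)` then exceeds every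
standard real. Properness at `η` says that preimages of bounded sets are bounded, and reading
boundedness through this characterization on both sides gives `*f⁻¹ FIN(Y,η) ⊆ FIN(X,ξ)`, and
conversely.
-/

open Metric

section
variable {X : Type*} [PseudoMetricSpace X]

theorem boundedSet_iff_isBounded {B : Set X} : BoundedSet B ↔ Bornology.IsBounded B :=
  isBounded_iff.symm

theorem coe_mem_FIN_iff {u : ℕ → X} {ξ : X} :
    (u : St X) ∈ FIN ξ ↔ ∃ r : ℝ, ∀ᶠ n in hyperfilter ℕ, dist (u n) ξ ≤ r :=
  exists_congr fun _ => Germ.coe_le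

theorem isBounded_iff_forall_coe_mem_FIN {S : Set X} (ξ : X) :
    Bornology.IsBounded S ↔
      ∀ u : ℕ → X, (∀ᶠ n in hyperfilter ℕ, u n ∈ S) → (u : St X) ∈ FIN ξ := by
  refine ⟨fun hS u hu => ?_, fun h => ?_⟩
  · obtain ⟨r, hr⟩ := (isBounded_iff_subset_closedBall ξ).mp hS
    exact coe_mem_FIN_iff.mpr ⟨r, hu.mono fun n hn => mem_closedBall.mp (hr hn)⟩
  · by_contra hS
    have hfar : ∀ n : ℕ, ∃ x ∈ S, (n : ℝ) < dist x ξ := fun n => by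
      obtain ⟨x, hxS, hx⟩ := Set.not_subset.mp fun hsub =>
        hS ((isBounded_iff_subset_closedBall ξ).mpr ⟨n, hsub⟩)
      exact ⟨x, hxS, not_le.mp hx⟩
    choose u huS hu using hfar
    obtain ⟨r, hr⟩ := coe_mem_FIN_iff.mp (h u (.of_forall huS))
    have hlarge : ∀ᶠ n in hyperfilter ℕ, r < dist (u n) ξ :=
      ((tendsto_atTop_mono (fun n => (hu n).le) tendsto_natCast_atTop_atTop).eventually_gt_atTop
        r).filter_mono Nat.hyperfilter_le_atTop
    obtain ⟨n, hle, hlt⟩ := (hr.and hlarge).exists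
    linarith

end

theorem properAt_iff_preimage_FIN_general {X Y : Type*} [PseudoMetricSpace X] [PseudoMetricSpace Y]
    (f : X → Y) (ξ : X) (η : Y) :
    ProperAt f η ↔ ∀ x : St X, x.map f ∈ FIN η → x ∈ FIN ξ := by
  simp only [ProperAt, boundedSet_iff_isBounded]
  refine ⟨fun hf x hx => ?_, fun hf B _ hB => ?_⟩
  · induction x using Germ.inductionOn with | h u => ?_
    obtain ⟨r, hr⟩ := coe_mem_FIN_iff.mp hx
    have hr₀ : 0 ≤ r := hr.exists.elim fun n hn => dist_nonneg.trans hn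
    have hpre := hf (closedBall η r) (mem_closedBall_self hr₀) isBounded_closedBall
    exact (isBounded_iff_forall_coe_mem_FIN ξ).mp hpre u
      (hr.mono fun n hn => mem_closedBall.mpr hn)
  · refine (isBounded_iff_forall_coe_mem_FIN ξ).mpr fun u hu => hf u ?_
    exact (isBounded_iff_forall_coe_mem_FIN η).mp hB (f ∘ u) hu

/-- A pointed map is proper at the base point iff `*f ⁻¹ (FIN(Y,η)) ⊆ FIN(X,ξ)`. -/
theorem properAt_iff_preimage_FIN {X Y : Type*} [PseudoMetricSpace X] [PseudoMetricSpace Y]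
    (f : X → Y) (ξ : X) (η : Y) (hf : f ξ = η) :
    ProperAt f η ↔ ∀ x : St X, x.map f ∈ FIN η → x ∈ FIN ξ :=
  properAt_iff_preimage_FIN_general f ξ η
end

section
/- Let X and Y be pseudometric spaces and f, g : X → Y maps. Then f and g are coarsely homotopic (there exists r : ℝ with d (f x) (g x) ≤ r for all x : X) if and only if *f x ∼ *g x for every x : *X. -/
open Filter

/-- Two maps are coarsely homotopic iff `*f x ∼ *g x` for every `x : *X`. -/
theorem coarselyHomotopic_iff_finClose {X Y : Type*} [PseudoMetricSpace X] [PseudoMetricSpace Y]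
    (f g : X → Y) :
    (∃ r : ℝ, ∀ x : X, dist (f x) (g x) ≤ r) ↔
      ∀ x : St X, FinClose (x.map f) (x.map g) := by
  constructor
  · rintro ⟨r, hr⟩ x
    induction x using Filter.Germ.inductionOn with
    | h a =>
      refine ⟨r, ?_⟩
      simp only [starDist, Filter.Germ.map_coe, Filter.Germ.map₂_coe]
      exact Filter.Germ.coe_le.mpr (Filter.Eventually.of_forall fun n => hr (a n))
  · intro h
    by_contra hc
    push_neg at hc
    have hc' : ∀ n : ℕ, ∃ x : X, (n : ℝ) < dist (f x) (g x) := fun n => hc n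
    choose a ha using hc'
    obtain ⟨r, hr⟩ := h (↑a)
    simp only [starDist, Filter.Germ.map_coe, Filter.Germ.map₂_coe] at hr
    have : ∀ᶠ n in (↑(Filter.hyperfilter ℕ) : Filter ℕ),
        dist (f (a n)) (g (a n)) ≤ r := Filter.Germ.coe_le.mp hr
    have h2 : ∀ᶠ (n : ℕ) in (↑(Filter.hyperfilter ℕ) : Filter ℕ), (n : ℝ) < dist (f (a n)) (g (a n)) :=
      Filter.Eventually.of_forall fun n => ha n
    have h3 := (this.and h2).and (Filter.hyperfilter_le_cofinite
      (Filter.eventually_cofinite.mpr ?_ : ∀ᶠ (n : ℕ) in Filter.cofinite, r < (n : ℝ)))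
    · obtain ⟨n, ⟨h4, h5⟩, h6⟩ := h3.exists
      linarith
    · have : {n : ℕ | ¬ r < (n : ℝ)} ⊆ Set.Iic ⌈r⌉₊ := by
        intro n hn
        simp only [Set.mem_setOf_eq, not_lt] at hn
        exact_mod_cast hn.trans (Nat.le_ceil r)
      exact (Set.finite_Iic _).subset this
end

section
/- Let X be a pseudometric space. Then X is coarsely Archimedean (there exists r : ℝ such that any two points of X can be joined by a finite chain whose consecutive points are at distance ≤ r) if and only if *X (the whole set of germs) is macrochain-connected. -/
open Filter

lemma starDist_coe_le_iff {X : Type*} [PseudoMetricSpace X] (f g : ℕ → X) (r : ℝ) :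
    starDist (↑f : St X) (↑g : St X) ≤ (↑r : St ℝ) ↔
      ∀ᶠ n in (↑(Filter.hyperfilter ℕ) : Filter ℕ), dist (f n) (g n) ≤ r := by
  rw [starDist, Filter.Germ.map₂_coe,
    show ((↑r : St ℝ)) = (↑(fun _ : ℕ => r) : St ℝ) from rfl, Filter.Germ.coe_le]
  rfl

/-- A pseudometric space is coarsely Archimedean iff `*X` is macrochain-connected. -/
theorem coarselyArchimedean_iff_macroChainConnected {X : Type*} [PseudoMetricSpace X] :
    (∃ r : ℝ, ∀ x y : X, ∃ n : ℕ, ∃ c : ℕ → X, c 0 = x ∧ c n = y ∧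
        ∀ i < n, dist (c i) (c (i + 1)) ≤ r) ↔
      MacroChainConnected (Set.univ : Set (St X)) := by
  constructor
  · rintro ⟨r, hr⟩ x _ y _
    obtain ⟨f, rfl⟩ : ∃ f : ℕ → X, x = ↑f := ⟨_, (Quotient.exists_rep x).choose_spec.symm⟩
    obtain ⟨g, rfl⟩ : ∃ g : ℕ → X, y = ↑g := ⟨_, (Quotient.exists_rep y).choose_spec.symm⟩
    choose m c hc0 hcN hstep using fun n => hr (f n) (g n)
    refine ⟨m, fun n i => c n (min i (m n)), ?_, ?_, fun _ _ => Set.mem_univ _, ?_⟩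
    · exact congrArg _ (funext fun n => by simpa using hc0 n)
    · exact congrArg _ (funext fun n => by simpa using hcN n)
    · intro g' hg'
      refine ⟨r, (starDist_coe_le_iff _ _ _).mpr ?_⟩
      filter_upwards [hg'] with n hn
      rw [min_eq_left hn.le, min_eq_left hn]
      exact hstep n _ hn
  · intro hmc
    by_contra hna
    push_neg at hna
    choose xk yk hxy using fun k : ℕ => hna k
    obtain ⟨N, s, hc0, hcN, _, hclose⟩ :=
      hmc (↑xk : St X) (Set.mem_univ _) (↑yk : St X) (Set.mem_univ _)
    rw [Filter.Germ.coe_eq] at hc0 hcN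
    -- `N n` is positive almost everywhere
    have hNpos : ∀ᶠ n in (↑(Filter.hyperfilter ℕ) : Filter ℕ), 0 < N n := by
      by_contra hnot
      rw [← Ultrafilter.eventually_not] at hnot
      have : ∀ᶠ n in (↑(Filter.hyperfilter ℕ) : Filter ℕ), False := by
        filter_upwards [hnot, hc0, hcN] with n h1 h2 h3
        have hN0 : N n = 0 := by omega
        have hxyeq : xk n = yk n := by rw [← h2, ← h3, hN0]
        obtain ⟨i, hi, -⟩ := hxy n 0 (fun _ => xk n) rfl hxyeq
        omega
      obtain ⟨_, h⟩ := this.exists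
      exact h
    -- pick the maximal step
    have hmax : ∀ n, 0 < N n → ∃ i, i < N n ∧ ∀ j < N n,
        dist (s n j) (s n (j + 1)) ≤ dist (s n i) (s n (i + 1)) := by
      intro n hn
      obtain ⟨i, hi, hle⟩ := (Finset.range (N n)).exists_max_image
        (fun j => dist (s n j) (s n (j + 1))) ⟨0, Finset.mem_range.mpr hn⟩
      exact ⟨i, Finset.mem_range.mp hi, fun j hj => hle j (Finset.mem_range.mpr hj)⟩
    classical
    set g : ℕ → ℕ := fun n => if h : 0 < N n then (hmax n h).choose else 0 with hg
    have hglt : ∀ᶠ n in (↑(Filter.hyperfilter ℕ) : Filter ℕ), g n < N n := by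
      filter_upwards [hNpos] with n hn
      simp only [hg, dif_pos hn]
      exact (hmax n hn).choose_spec.1
    obtain ⟨r, hrle⟩ := hclose g hglt
    have hrle' : ∀ᶠ n in (↑(Filter.hyperfilter ℕ) : Filter ℕ),
        dist (s n (g n)) (s n (g n + 1)) ≤ r := by
      exact (starDist_coe_le_iff _ _ _).mp hrle
    have hE : ∀ᶠ n in (↑(Filter.hyperfilter ℕ) : Filter ℕ),
        0 < N n ∧ s n 0 = xk n ∧ s n (N n) = yk n ∧
          (∀ j < N n, dist (s n j) (s n (j + 1)) ≤ r) ∧ r ≤ (n : ℝ) := by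
      have hbig : ∀ᶠ n : ℕ in (↑(Filter.hyperfilter ℕ) : Filter ℕ), r ≤ (n : ℝ) := by
        apply Nat.hyperfilter_le_atTop
        filter_upwards [Filter.eventually_ge_atTop ⌈r⌉₊] with n hn
        calc r ≤ (⌈r⌉₊ : ℝ) := Nat.le_ceil r
          _ ≤ (n : ℝ) := Nat.cast_le.mpr hn
      filter_upwards [hNpos, hc0, hcN, hrle', hbig] with n h1 h2 h3 h4 h5
      refine ⟨h1, h2, h3, fun j hj => ?_, h5⟩
      have : g n = (hmax n h1).choose := dif_pos h1
      exact le_trans ((this ▸ (hmax n h1).choose_spec.2) j hj) h4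
    obtain ⟨n, hN1, hs0, hsN, hjs, hrn⟩ := hE.exists
    obtain ⟨i, hi, hgt⟩ := hxy n (N n) (fun i => s n (min i (N n)))
      (by simpa using hs0) (by simpa using hsN)
    rw [min_eq_left hi.le, min_eq_left hi] at hgt
    exact absurd (le_trans (hjs i hi) hrn) (not_le.mpr hgt)
end

section
/- Let X be a pseudometric space and ξ, η : X (any two base points; a pseudometric space is coarsely connected). Then INF(X,ξ) = INF(X,η), and for all x, y ∈ INF(X,ξ), x ≡ι y with respect to the base point ξ if and only if x ≡ι y with respect to the base point η; in particular the set of macrochain-connected components of INF(X,ξ) coincides with that of INF(X,η), i.e. ι(X,ξ) = ι(X,η). -/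
open Filter

/-- Changing the base point: for any two base points of a pseudometric space (which is
coarsely connected), the infinite parts coincide and the relations `≡ι` agree, so
`ι(X,ξ) = ι(X,η)`. -/
theorem iota_basePoint_independent {X : Type*} [PseudoMetricSpace X] (ξ η : X) :
    INF ξ = INF η ∧
      ∀ x ∈ INF ξ, ∀ y ∈ INF ξ, (IotaEquiv ξ x y ↔ IotaEquiv η x y) := by
  have key : ∀ ζ θ : X, ∀ x : St X, FinClose x (↑ζ : St X) → FinClose x (↑θ : St X) := by
    intro ζ θ x hx
    obtain ⟨r, hr⟩ := hx
    refine ⟨r + dist ζ θ, ?_⟩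
    induction x using Filter.Germ.inductionOn with
    | h f =>
      have hr' : ∀ᶠ n in (↑(Filter.hyperfilter ℕ) : Filter ℕ), dist (f n) ζ ≤ r := hr
      refine Filter.Germ.coe_le.mpr (hr'.mono fun n hn => ?_)
      calc dist (f n) θ ≤ dist (f n) ζ + dist ζ θ := dist_triangle _ _ _
        _ ≤ r + dist ζ θ := by linarith
  have hINF : INF ξ = INF η := by
    ext x
    exact ⟨fun h hx => h (key η ξ x hx), fun h hx => h (key ξ η x hx)⟩
  exact ⟨hINF, fun x _ y _ => by rw [IotaEquiv, IotaEquiv, hINF]⟩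
end

section
/- (Functoriality of ι.) Let X and Y be pseudometric spaces with base points ξ : X and η : Y, and let f : X → Y be a coarse map (bornologous and proper at the base point) with f ξ = η. If x, y ∈ INF(X,ξ) and x ≡ι y, then *f x, *f y ∈ INF(Y,η) and *f x ≡ι *f y. Consequently f induces a well-defined map ιf from the macrochain-connected components of INF(X,ξ) to those of INF(Y,η), sending the component of x to the component of *f x. -/
open Filter

lemma finclose_map {X Y : Type*} [PseudoMetricSpace X] [PseudoMetricSpace Y]
    (f : X → Y) (hb : Bornologous f) (u v : ℕ → X)
    (h : FinClose (↑u : St X) (↑v)) :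
    FinClose (↑(fun n => f (u n)) : St Y) (↑(fun n => f (v n))) := by
  obtain ⟨r, hr⟩ := h
  rw [starDist, Filter.Germ.map₂_coe] at hr
  obtain ⟨s, hs⟩ := hb r
  refine ⟨s, ?_⟩
  rw [starDist, Filter.Germ.map₂_coe]
  exact Filter.Germ.coe_le.mpr ((Filter.Germ.coe_le.mp hr).mono fun n hn => hs _ _ hn)

lemma finclose_pull {X Y : Type*} [PseudoMetricSpace X] [PseudoMetricSpace Y]
    (f : X → Y) (ξ : X) (η : Y) (hf : f ξ = η) (hp : ProperAt f η) (u : ℕ → X)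
    (h : FinClose (↑(fun n => f (u n)) : St Y) (↑η : St Y)) :
    FinClose (↑u : St X) (↑ξ : St X) := by
  obtain ⟨r, hr⟩ := h
  rw [starDist, show ((↑η : St Y)) = (↑(fun (_ : ℕ) => η) : St Y) from rfl,
    Filter.Germ.map₂_coe] at hr
  have hr' : ∀ᶠ n in (↑(Filter.hyperfilter ℕ) : Filter ℕ), dist (f (u n)) η ≤ max r 0 :=
    (Filter.Germ.coe_le.mp hr).mono fun n hn => le_trans hn (le_max_left _ _)
  set B : Set Y := {y | dist y η ≤ max r 0} with hB
  have hηB : η ∈ B := by simp [hB]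
  have hBb : BoundedSet B := by
    refine ⟨2 * max r 0, fun a ha b hb => ?_⟩
    calc dist a b ≤ dist a η + dist η b := dist_triangle _ _ _
    _ ≤ max r 0 + max r 0 := add_le_add ha (by rw [dist_comm]; exact hb)
    _ = 2 * max r 0 := by ring
  obtain ⟨s, hs⟩ := hp B hηB hBb
  have hξ : ξ ∈ f ⁻¹' B := by simp [hB, hf, le_max_right]
  refine ⟨s, ?_⟩
  rw [starDist, show ((↑ξ : St X)) = (↑(fun (_ : ℕ) => ξ) : St X) from rfl,
    Filter.Germ.map₂_coe]
  exact Filter.Germ.coe_le.mpr (hr'.mono fun n hn => hs _ hn _ hξ)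

lemma map_inf {X Y : Type*} [PseudoMetricSpace X] [PseudoMetricSpace Y]
    (f : X → Y) (ξ : X) (η : Y) (hf : f ξ = η) (hp : ProperAt f η) (u : ℕ → X)
    (hu : (↑u : St X) ∈ INF ξ) : (↑(fun n => f (u n)) : St Y) ∈ INF η :=
  fun h => hu (finclose_pull f ξ η hf hp u h)

/-- Functoriality of `ι`: a coarse map sends `≡ι`-related pairs of infinite points
to `≡ι`-related pairs of infinite points, hence induces a well-defined map on
macrochain-connected components. -/
theorem iota_functorial {X Y : Type*} [PseudoMetricSpace X] [PseudoMetricSpace Y]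
    (f : X → Y) (ξ : X) (η : Y) (hf : f ξ = η)
    (hb : Bornologous f) (hp : ProperAt f η) :
    ∀ x ∈ INF ξ, ∀ y ∈ INF ξ, IotaEquiv ξ x y →
      x.map f ∈ INF η ∧ y.map f ∈ INF η ∧ IotaEquiv η (x.map f) (y.map f) := by
  intro x hx y hy ⟨N, s, hs0, hsN, hmem, hclose⟩
  have hx' : x = (↑(fun n => s n 0) : St X) := hs0.symm
  have hy' : y = (↑(fun n => s n (N n)) : St X) := hsN.symm
  subst hx' hy'
  have key : ∀ g : ℕ → ℕ,
      (∀ᶠ n in (↑(Filter.hyperfilter ℕ) : Filter ℕ), g n ≤ N n) →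
      ((↑(fun n => s n (g n)) : St X).map f) ∈ INF η := by
    intro g hg
    have := hmem g hg
    rw [Filter.Germ.map_coe]
    exact map_inf f ξ η hf hp _ this
  have h0 : ∀ᶠ n in (↑(Filter.hyperfilter ℕ) : Filter ℕ), (fun _ => 0) n ≤ N n :=
    Filter.Eventually.of_forall fun n => Nat.zero_le _
  have hN : ∀ᶠ n in (↑(Filter.hyperfilter ℕ) : Filter ℕ), N n ≤ N n :=
    Filter.Eventually.of_forall fun n => le_rfl
  refine ⟨key (fun _ => 0) h0, key N hN, N, fun n k => f (s n k), ?_, ?_, ?_, ?_⟩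
  · rw [Filter.Germ.map_coe]; rfl
  · rw [Filter.Germ.map_coe]; rfl
  · intro g hg
    exact map_inf f ξ η hf hp _ (hmem g hg)
  · intro g hg
    exact finclose_map f hb _ _ (hclose g hg)
end

section
/- Let (X, ξ) be a pointed pseudometric space that is non-scattering at infinity. Then INF(X,ξ) is macrochain-connected; in particular any two points x, y ∈ INF(X,ξ) satisfy x ≡ι y, so ι(X,ξ) is empty or a singleton. -/
open Filter

/-- If a pointed pseudometric space is non-scattering at infinity, then `INF(X,ξ)` is
macrochain-connected; in particular `ι(X,ξ)` is empty or a singleton. -/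
theorem nonScattering_macroChainConnected {X : Type*} [PseudoMetricSpace X] (ξ : X)
    (h : NonScattering ξ) :
    MacroChainConnected (INF ξ) := by
  obtain ⟨r, hr⟩ := h
  intro x hx y hy
  revert hx hy
  refine Germ.inductionOn x fun a => Germ.inductionOn y fun b => ?_
  intro hx hy
  -- key: infinite points are eventually farther than any real from ξ
  have key : ∀ f : ℕ → X, (↑f : St X) ∈ INF ξ → ∀ q : ℝ,
      ∀ᶠ n in (↑(Filter.hyperfilter ℕ) : Filter ℕ), q < dist (f n) ξ := by
    intro f hf q
    have h1 : ¬ ∀ᶠ n in (↑(Filter.hyperfilter ℕ) : Filter ℕ), dist (f n) ξ ≤ q := by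
      intro hq
      exact hf ⟨q, Germ.coe_le.mpr hq⟩
    exact (Ultrafilter.eventually_not.mpr h1).mono fun n hn => not_le.mp hn
  have ha1 := key a hx 1
  have hb1 := key b hy 1
  set R : ℕ → ℝ := fun n => min (dist (a n) ξ) (dist (b n) ξ) - 1 with hRdef
  have main : ∀ n : ℕ, ∃ (m : ℕ) (c : ℕ → X), c 0 = a n ∧
      ((1 < dist (a n) ξ ∧ 1 < dist (b n) ξ) →
        c m = b n ∧ (∀ i, R n < dist (c (min i m)) ξ) ∧
        (∀ i < m, dist (c i) (c (i + 1)) ≤ r)) := by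
    intro n
    by_cases hn : 1 < dist (a n) ξ ∧ 1 < dist (b n) ξ
    · have hR0 : 0 ≤ R n := by
        simp only [hRdef, sub_nonneg, le_min_iff]
        exact ⟨hn.1.le, hn.2.le⟩
      have hRa : R n < dist (a n) ξ := by
        have : R n ≤ dist (a n) ξ - 1 := sub_le_sub_right (min_le_left _ _) 1
        linarith
      have hRb : R n < dist (b n) ξ := by
        have : R n ≤ dist (b n) ξ - 1 := sub_le_sub_right (min_le_right _ _) 1
        linarith
      obtain ⟨m, c, hc0, hcm, hcmem, hcstep⟩ :=
        hr (Metric.closedBall ξ (R n)) (Metric.mem_closedBall_self hR0)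
          ⟨2 * R n, fun p hp q hq => by
            have := dist_triangle p ξ q
            rw [Metric.mem_closedBall] at hp hq
            rw [dist_comm ξ q] at this
            linarith⟩
          (a n) (by simp [Metric.mem_closedBall]; exact hRa)
          (b n) (by simp [Metric.mem_closedBall]; exact hRb)
      refine ⟨m, c, hc0, fun _ => ⟨hcm, fun i => ?_, hcstep⟩⟩
      have := hcmem (min i m) (min_le_right _ _)
      simp only [Set.mem_compl_iff, Metric.mem_closedBall, not_le] at this
      exact this
    · exact ⟨0, fun _ => a n, rfl, fun hP => absurd hP hn⟩
  choose m c hc0 hcP using main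
  refine ⟨m, fun n i => c n (min i (m n)), ?_, ?_, ?_, ?_⟩
  · refine Germ.coe_eq.mpr (Filter.Eventually.of_forall fun n => ?_)
    simp [hc0 n]
  · refine Germ.coe_eq.mpr ((ha1.and hb1).mono fun n hn => ?_)
    simp [(hcP n hn).1]
  · intro g hg
    rintro ⟨q, hq⟩
    have hq' : ∀ᶠ n in (↑(Filter.hyperfilter ℕ) : Filter ℕ),
        dist (c n (min (g n) (m n))) ξ ≤ q := Germ.coe_le.mp hq
    have haq := key a hx (q + 1)
    have hbq := key b hy (q + 1)
    have : ∀ᶠ n in (↑(Filter.hyperfilter ℕ) : Filter ℕ), False := by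
      filter_upwards [ha1, hb1, haq, hbq, hq'] with n h1 h2 h3 h4 h5
      have hmem := (hcP n ⟨h1, h2⟩).2.1 (g n)
      have hRq : q < R n := by
        simp only [hRdef, lt_sub_iff_add_lt, lt_min_iff]
        constructor <;> linarith
      linarith
    exact this.exists.elim fun _ h => h
  · intro g hg
    refine ⟨r, Germ.coe_le.mpr ?_⟩
    filter_upwards [ha1, hb1, hg] with n h1 h2 h3
    have h4 : min (g n) (m n) = g n := min_eq_left h3.le
    have h5 : min (g n + 1) (m n) = g n + 1 := min_eq_left h3
    show dist (c n (min (g n) (m n))) (c n (min (g n + 1) (m n))) ≤ r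
    rw [h4, h5]
    exact (hcP n ⟨h1, h2⟩).2.2 (g n) h3
end

section
/- Let X be a pseudometric space with base point ξ, let s and t be coarse sequences on X, and let i, j : *ℕ be infinite. Then *s_i and *t_j belong to INF(X,ξ); moreover, if s ≡σ t, then *s_i ≡ι *t_j. -/
open Filter

section CoarseAux
open Filter
variable {X : Type*} [PseudoMetricSpace X]


lemma finClose_coe (f g : ℕ → X) :
    FinClose (↑f : St X) ↑g ↔ ∃ r : ℝ, ∀ᶠ n in (↑(Filter.hyperfilter ℕ) : Filter ℕ), dist (f n) (g n) ≤ r := by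
  unfold FinClose starDist
  constructor
  · rintro ⟨r, hr⟩
    exact ⟨r, Germ.coe_le.mp hr⟩
  · rintro ⟨r, hr⟩
    exact ⟨r, Germ.coe_le.mpr hr⟩

lemma finClose_symm {x y : St X} (h : FinClose x y) : FinClose y x := by
  induction x using Filter.Germ.inductionOn with
  | h f =>
    induction y using Filter.Germ.inductionOn with
    | h g =>
      obtain ⟨r, hr⟩ := (finClose_coe f g).mp h
      exact (finClose_coe g f).mpr ⟨r, hr.mono fun n hn => by rwa [dist_comm]⟩

lemma infinite_coe_iff (a : ℕ → ℕ) :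
    InfiniteHypernat (↑a : St ℕ) ↔ ∀ m : ℕ, ¬ ∀ᶠ n in (↑(Filter.hyperfilter ℕ) : Filter ℕ), a n ≤ m := by
  unfold InfiniteHypernat
  constructor
  · intro h m hm; exact h m (Germ.coe_le.mpr hm)
  · intro h m hm; exact h m (Germ.coe_le.mp hm)

lemma infinite_mono {a b : ℕ → ℕ} (h : ∀ᶠ n in (↑(Filter.hyperfilter ℕ) : Filter ℕ), a n ≤ b n)
    (ha : InfiniteHypernat (↑a : St ℕ)) : InfiniteHypernat (↑b : St ℕ) := by
  rw [infinite_coe_iff] at ha ⊢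
  intro m hm
  exact ha m (by filter_upwards [h, hm] with n h1 h2; omega)

lemma infinite_min {a b : ℕ → ℕ} (ha : InfiniteHypernat (↑a : St ℕ))
    (hb : InfiniteHypernat (↑b : St ℕ)) :
    InfiniteHypernat (↑(fun n => min (a n) (b n)) : St ℕ) := by
  rw [infinite_coe_iff] at ha hb ⊢
  intro m hm
  rcases (Filter.hyperfilter ℕ).em (fun n => a n ≤ b n) with hA | hA
  · exact ha m (by filter_upwards [hA, hm] with n h1 h2; omega)
  · exact hb m (by filter_upwards [hA, hm] with n h1 h2; omega)

lemma image_inf (ξ : X) (t : ℕ → X) (ht : CoarseSeq t) (a : ℕ → ℕ)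
    (ha : InfiniteHypernat (↑a : St ℕ)) :
    (↑(fun n => t (a n)) : St X) ∈ INF ξ := by
  intro hfc
  obtain ⟨r, hr⟩ := (finClose_coe _ _).mp hfc
  have hB : BoundedSet {x : X | dist x ξ ≤ r} := by
    refine ⟨r + r, fun u hu v hv => ?_⟩
    calc dist u v ≤ dist u ξ + dist ξ v := dist_triangle u ξ v
    _ ≤ r + r := add_le_add hu (by rwa [dist_comm])
  have hfin : (t ⁻¹' {x : X | dist x ξ ≤ r}).Finite := ht.2 _ hB
  obtain ⟨m, hm⟩ := hfin.bddAbove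
  exact (infinite_coe_iff a).mp ha m (hr.mono fun n hn => hm hn)

def walk (x y k : ℕ) : ℕ := if x ≤ y then min (x + k) y else max (x - k) y

lemma walk_zero (x y : ℕ) : walk x y 0 = x := by
  simp only [walk, Nat.min_def, Nat.max_def]; split_ifs <;> omega

lemma walk_dist (x y : ℕ) : walk x y (Nat.dist x y) = y := by
  simp only [walk, Nat.min_def, Nat.max_def, Nat.dist]; split_ifs <;> omega

lemma min_le_walk (x y k : ℕ) : min x y ≤ walk x y k := by
  simp only [walk, Nat.min_def, Nat.max_def]; split_ifs <;> omega

lemma walk_step (x y k : ℕ) : Nat.dist (walk x y k) (walk x y (k + 1)) ≤ 1 := by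
  simp only [walk, Nat.min_def, Nat.max_def, Nat.dist]; split_ifs <;> omega

lemma iota_self (ξ : X) (t : ℕ → X) (ht : CoarseSeq t) (a b : ℕ → ℕ)
    (ha : InfiniteHypernat (↑a : St ℕ)) (hb : InfiniteHypernat (↑b : St ℕ)) :
    IotaEquiv ξ (↑(fun n => t (a n)) : St X) (↑(fun n => t (b n)) : St X) := by
  refine ⟨fun n => Nat.dist (a n) (b n), fun n k => t (walk (a n) (b n) k), ?_, ?_, ?_, ?_⟩
  · have : (fun n => t (walk (a n) (b n) 0)) = fun n => t (a n) := by
      funext n; rw [walk_zero]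
    rw [this]
  · have : (fun n => t (walk (a n) (b n) (Nat.dist (a n) (b n)))) = fun n => t (b n) := by
      funext n; rw [walk_dist]
    rw [this]
  · intro g _
    exact image_inf ξ t ht _
      (infinite_mono (Eventually.of_forall fun n => min_le_walk (a n) (b n) (g n))
        (infinite_min ha hb))
  · intro g _
    obtain ⟨r, hr⟩ := ht.1 1
    exact (finClose_coe _ _).mpr
      ⟨r, Eventually.of_forall fun n => hr _ _ (walk_step (a n) (b n) (g n))⟩

lemma internalChain_symm {B : Set (St X)} {x y : St X} {N : ℕ → ℕ} {s : ℕ → ℕ → X}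
    (h : InternalChain B x y N s) :
    InternalChain B y x N (fun n k => s n (N n - k)) := by
  obtain ⟨h0, h1, hm, hc⟩ := h
  refine ⟨?_, ?_, ?_, ?_⟩
  · exact h1
  · rw [← h0]
    exact Germ.coe_eq.mpr (Eventually.of_forall fun n => by simp)
  · intro g _
    exact hm (fun n => N n - g n) (Eventually.of_forall fun n => Nat.sub_le _ _)
  · intro g hg
    have e1 : (↑(fun n => s n (N n - g n)) : St X)
        = ↑(fun n => s n (N n - (g n + 1) + 1)) := by
      apply Germ.coe_eq.mpr; filter_upwards [hg] with n hn; congr 1; omega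
    have := hc (fun n => N n - (g n + 1)) (hg.mono fun n hn => by show N n - (g n + 1) < N n; omega)
    exact e1 ▸ finClose_symm this

lemma internalChain_trans {B : Set (St X)} {x y z : St X} {N1 N2 : ℕ → ℕ}
    {s1 s2 : ℕ → ℕ → X}
    (h1 : InternalChain B x y N1 s1) (h2 : InternalChain B y z N2 s2) :
    ∃ N s, InternalChain B x z N s := by
  obtain ⟨h10, h11, h1m, h1c⟩ := h1
  obtain ⟨h20, h21, h2m, h2c⟩ := h2
  have hj : ∀ᶠ n in (↑(Filter.hyperfilter ℕ) : Filter ℕ), s1 n (N1 n) = s2 n 0 := Germ.coe_eq.mp (h11.trans h20.symm)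
  refine ⟨fun n => N1 n + N2 n,
    fun n k => if k ≤ N1 n then s1 n k else s2 n (k - N1 n), ?_, ?_, ?_, ?_⟩
  · rw [← h10]
    exact Germ.coe_eq.mpr (Eventually.of_forall fun n => by simp)
  · rw [← h21]
    apply Germ.coe_eq.mpr
    filter_upwards [hj] with n hn
    by_cases h : N2 n = 0
    · simp [h, hn]
    · have hc : ¬ (N1 n + N2 n ≤ N1 n) := by omega
      simp only [if_neg hc]
      congr 1; omega
  · intro g hg
    rcases (Filter.hyperfilter ℕ).em (fun n => g n ≤ N1 n) with hA | hA
    · have e : (↑(fun n => if g n ≤ N1 n then s1 n (g n) else s2 n (g n - N1 n)) : St X)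
          = ↑(fun n => s1 n (g n)) :=
        Germ.coe_eq.mpr (hA.mono fun n h => by simp [h])
      rw [e]; exact h1m g hA
    · have e : (↑(fun n => if g n ≤ N1 n then s1 n (g n) else s2 n (g n - N1 n)) : St X)
          = ↑(fun n => s2 n (g n - N1 n)) :=
        Germ.coe_eq.mpr (hA.mono fun n h => by simp [h])
      rw [e]
      exact h2m _ (by filter_upwards [hg, hA] with n h h'; omega)
  · intro g hg
    rcases (Filter.hyperfilter ℕ).em (fun n => g n < N1 n) with hA | hA
    · have e1 : (↑(fun n => if g n ≤ N1 n then s1 n (g n) else s2 n (g n - N1 n)) : St X)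
          = ↑(fun n => s1 n (g n)) :=
        Germ.coe_eq.mpr (hA.mono fun n h => by simp [Nat.le_of_lt h])
      have e2 : (↑(fun n => if g n + 1 ≤ N1 n then s1 n (g n + 1) else s2 n (g n + 1 - N1 n)) : St X)
          = ↑(fun n => s1 n (g n + 1)) :=
        Germ.coe_eq.mpr (hA.mono fun n h => by simp [Nat.succ_le_of_lt h])
      rw [e1, e2]; exact h1c g hA
    · have e1 : (↑(fun n => if g n ≤ N1 n then s1 n (g n) else s2 n (g n - N1 n)) : St X)
          = ↑(fun n => s2 n (g n - N1 n)) := by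
        apply Germ.coe_eq.mpr
        filter_upwards [hA, hj] with n h hjn
        by_cases hgn : g n ≤ N1 n
        · have hge : g n = N1 n := by omega
          simp [hgn, hge, hjn]
        · simp only [if_neg hgn]
      have e2 : (↑(fun n => if g n + 1 ≤ N1 n then s1 n (g n + 1) else s2 n (g n + 1 - N1 n)) : St X)
          = ↑(fun n => s2 n (g n - N1 n + 1)) := by
        apply Germ.coe_eq.mpr
        filter_upwards [hA] with n h
        have hc : ¬ (g n + 1 ≤ N1 n) := by omega
        simp only [if_neg hc]
        congr 1; omega
      rw [e1, e2]
      exact h2c _ (by filter_upwards [hg, hA] with n h h'; omega)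

lemma iotaEquiv_symm {ξ : X} {x y : St X} (h : IotaEquiv ξ x y) : IotaEquiv ξ y x := by
  obtain ⟨N, s, hc⟩ := h
  exact ⟨N, _, internalChain_symm hc⟩

lemma iotaEquiv_trans {ξ : X} {x y z : St X} (h1 : IotaEquiv ξ x y)
    (h2 : IotaEquiv ξ y z) : IotaEquiv ξ x z := by
  obtain ⟨N1, s1, hc1⟩ := h1
  obtain ⟨N2, s2, hc2⟩ := h2
  exact internalChain_trans hc1 hc2

lemma sigma_key (ξ : X) (s t : ℕ → X) (h : SigmaEquiv s t) :
    s = t ∨ (CoarseSeq s ∧ CoarseSeq t ∧ ∀ a b : ℕ → ℕ,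
      InfiniteHypernat (↑a : St ℕ) → InfiniteHypernat (↑b : St ℕ) →
      IotaEquiv ξ (↑(fun n => s (a n)) : St X) (↑(fun n => t (b n)) : St X)) := by
  induction h with
  | rel u v huv =>
    obtain ⟨hu, hv, κ, hκ, huk⟩ := huv
    right
    refine ⟨hu, hv, fun a b ha hb => ?_⟩
    have e : (↑(fun n => u (a n)) : St X) = ↑(fun n => v (κ (a n))) := by
      rw [huk]; rfl
    rw [e]
    exact iota_self ξ v hv _ b
      (infinite_mono (Eventually.of_forall fun n => hκ.le_apply) ha) hb
  | refl u => left; rfl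
  | symm u v _ ih =>
    rcases ih with h | ⟨hu, hv, hiv⟩
    · left; exact h.symm
    · right; exact ⟨hv, hu, fun a b ha hb => iotaEquiv_symm (hiv b a hb ha)⟩
  | trans u v w _ _ ih1 ih2 =>
    rcases ih1 with h1 | ⟨hu, hv, hiv1⟩
    · rwa [h1]
    · rcases ih2 with h2 | ⟨_, hw, hiv2⟩
      · right; exact ⟨hu, h2 ▸ hv, h2 ▸ hiv1⟩
      · right
        refine ⟨hu, hw, fun a b ha hb => ?_⟩
        exact iotaEquiv_trans (hiv1 a a ha ha) (hiv2 a b ha hb)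

end CoarseAux

/-- For coarse sequences `s, t` and infinite `i, j : *ℕ`, the points `*s_i, *t_j` are
infinite; and if `s ≡σ t` then `*s_i ≡ι *t_j`. -/
theorem coarseSeq_infinite_and_sigma_to_iota {X : Type*} [PseudoMetricSpace X] (ξ : X)
    (s t : ℕ → X) (hs : CoarseSeq s) (ht : CoarseSeq t)
    (i j : St ℕ) (hi : InfiniteHypernat i) (hj : InfiniteHypernat j) :
    i.map s ∈ INF ξ ∧ j.map t ∈ INF ξ ∧
      (SigmaEquiv s t → IotaEquiv ξ (i.map s) (j.map t)) := by
  induction i using Filter.Germ.inductionOn with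
  | h a =>
    induction j using Filter.Germ.inductionOn with
    | h b =>
      have ha : InfiniteHypernat (↑a : St ℕ) := hi
      have hb : InfiniteHypernat (↑b : St ℕ) := hj
      have e1 : (Filter.Germ.map s ↑a : St X) = ↑(fun n => s (a n)) := rfl
      have e2 : (Filter.Germ.map t ↑b : St X) = ↑(fun n => t (b n)) := rfl
      refine ⟨e1 ▸ image_inf ξ s hs a ha, e2 ▸ image_inf ξ t ht b hb, fun hst => ?_⟩
      rw [e1, e2]
      rcases sigma_key ξ s t hst with h | ⟨_, _, hiv⟩
      · subst h; exact iota_self ξ s hs a b ha hb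
      · exact hiv a b ha hb
end

section
/- Let (X, ξ) be a pointed pseudometric space that is non-scattering at infinity. Then any two coarse sequences s and t on X satisfy s ≡σ t; in particular, the set σ(X,ξ) of ≡σ-equivalence classes of coarse sequences is empty or a singleton. -/
open Filter

namespace AuxCS

def off (len : ℕ → ℕ) : ℕ → ℕ
  | 0 => 0
  | k+1 => off len k + len k

lemma off_mono (len : ℕ → ℕ) : Monotone (off len) :=
  monotone_nat_of_le_succ fun k => Nat.le_add_right _ _

lemma lt_off_succ (len : ℕ → ℕ) (hlen : ∀ k, 0 < len k) (n : ℕ) : n < off len (n+1) := by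
  induction n with
  | zero => simpa [off] using hlen 0
  | succ n ih => have := hlen (n+1); simp only [off] at *; omega

noncomputable def stg (len : ℕ → ℕ) (hlen : ∀ k, 0 < len k) (n : ℕ) : ℕ :=
  Nat.find (⟨n, lt_off_succ len hlen n⟩ : ∃ k, n < off len (k+1))

lemma stg_lt (len : ℕ → ℕ) (hlen : ∀ k, 0 < len k) (n : ℕ) :
    n < off len (stg len hlen n + 1) :=
  Nat.find_spec (⟨n, lt_off_succ len hlen n⟩ : ∃ k, n < off len (k+1))

lemma stg_le (len : ℕ → ℕ) (hlen : ∀ k, 0 < len k) (n : ℕ) :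
    off len (stg len hlen n) ≤ n := by
  rcases Nat.eq_zero_or_pos (stg len hlen n) with h | h
  · simp [h, off]
  · have hmin := Nat.find_min (⟨n, lt_off_succ len hlen n⟩ : ∃ k, n < off len (k+1))
      (Nat.sub_lt h Nat.one_pos)
    have h2 : stg len hlen n - 1 + 1 = stg len hlen n := by omega
    change ¬ n < off len (stg len hlen n - 1 + 1) at hmin
    rw [h2] at hmin
    omega

lemma stg_eq (len : ℕ → ℕ) (hlen : ∀ k, 0 < len k) {n k : ℕ}
    (h1 : off len k ≤ n) (h2 : n < off len (k+1)) : stg len hlen n = k := by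
  have ha : stg len hlen n ≤ k := Nat.find_le h2
  by_contra hne
  have hlt : stg len hlen n + 1 ≤ k := by omega
  have := off_mono len hlt
  have := stg_lt len hlen n
  omega

noncomputable def concatSeq {X : Type*} (len : ℕ → ℕ) (hlen : ∀ k, 0 < len k)
    (f : ℕ → ℕ → X) (n : ℕ) : X :=
  f (stg len hlen n) (n - off len (stg len hlen n))

lemma concat_eval {X : Type*} (len : ℕ → ℕ) (hlen : ∀ k, 0 < len k)
    (f : ℕ → ℕ → X) (k i : ℕ) (hi : i < len k) :
    concatSeq len hlen f (off len k + i) = f k i := by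
  have h1 : off len k ≤ off len k + i := Nat.le_add_right _ _
  have h2 : off len k + i < off len (k+1) := by simp only [off]; omega
  simp [concatSeq, stg_eq len hlen h1 h2]

lemma concat_step {X : Type*} [PseudoMetricSpace X] (len : ℕ → ℕ) (hlen : ∀ k, 0 < len k)
    (f : ℕ → ℕ → X) (R : ℝ)
    (hstep : ∀ k i, i + 1 < len k → dist (f k i) (f k (i+1)) ≤ R)
    (hjunc : ∀ k, dist (f k (len k - 1)) (f (k+1) 0) ≤ R) (n : ℕ) :
    dist (concatSeq len hlen f n) (concatSeq len hlen f (n+1)) ≤ R := by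
  obtain ⟨k, hk⟩ : ∃ k, stg len hlen n = k := ⟨_, rfl⟩
  have h1 := stg_le len hlen n
  have h2 := stg_lt len hlen n
  rw [hk] at h1 h2
  have hoff : off len (k+1) = off len k + len k := rfl
  have hne : n = off len k + (n - off len k) := by omega
  have hilt : n - off len k < len k := by omega
  by_cases hc : n - off len k + 1 < len k
  · have e1 : concatSeq len hlen f n = f k (n - off len k) := by
      conv_lhs => rw [hne]
      exact concat_eval len hlen f k _ hilt
    have e2 : concatSeq len hlen f (n+1) = f k (n - off len k + 1) := by
      have h3 : n + 1 = off len k + (n - off len k + 1) := by omega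
      rw [h3]; exact concat_eval len hlen f k _ hc
    rw [e1, e2]; exact hstep k _ hc
  · have hieq : n - off len k = len k - 1 := by omega
    have e1 : concatSeq len hlen f n = f k (len k - 1) := by
      conv_lhs => rw [hne]
      rw [hieq]
      exact concat_eval len hlen f k _ (by have := hlen k; omega)
    have e2 : concatSeq len hlen f (n+1) = f (k+1) 0 := by
      have h3 : n + 1 = off len (k+1) + 0 := by omega
      rw [h3]; exact concat_eval len hlen f (k+1) _ (hlen (k+1))
    rw [e1, e2]; exact hjunc k

lemma concat_dist {X : Type*} [PseudoMetricSpace X] (len : ℕ → ℕ) (hlen : ∀ k, 0 < len k)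
    (f : ℕ → ℕ → X) (R : ℝ)
    (hstep : ∀ k i, i + 1 < len k → dist (f k i) (f k (i+1)) ≤ R)
    (hjunc : ∀ k, dist (f k (len k - 1)) (f (k+1) 0) ≤ R) (m d : ℕ) :
    dist (concatSeq len hlen f m) (concatSeq len hlen f (m+d)) ≤ d * R := by
  induction d with
  | zero => simp
  | succ d ih =>
      have hst := concat_step len hlen f R hstep hjunc (m+d)
      have htri := dist_triangle (concatSeq len hlen f m) (concatSeq len hlen f (m+d))
        (concatSeq len hlen f (m+d+1))
      have hmd : m + (d+1) = m + d + 1 := by omega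
      rw [hmd]
      push_cast
      linarith

end AuxCS



namespace AuxCS

lemma boundedSet_closedBall {X : Type*} [PseudoMetricSpace X] (ξ : X) (ρ : ℝ) :
    BoundedSet (Metric.closedBall ξ ρ) := by
  refine ⟨2 * ρ, fun a ha b hb => ?_⟩
  simp only [Metric.mem_closedBall] at ha hb
  calc dist a b ≤ dist a ξ + dist ξ b := dist_triangle _ _ _
  _ ≤ ρ + ρ := by rw [dist_comm ξ b]; exact add_le_add ha hb
  _ = 2 * ρ := by ring

lemma bounded_subset_ball {X : Type*} [PseudoMetricSpace X] (ξ : X) (B : Set X)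
    (hB : BoundedSet B) : ∃ K : ℕ, B ⊆ Metric.closedBall ξ (K : ℝ) := by
  rcases B.eq_empty_or_nonempty with h | ⟨b0, hb0⟩
  · exact ⟨0, by simp [h]⟩
  · obtain ⟨ρ, hρ⟩ := hB
    obtain ⟨K, hK⟩ := exists_nat_ge (ρ + dist b0 ξ)
    refine ⟨K, fun x hx => ?_⟩
    simp only [Metric.mem_closedBall]
    calc dist x ξ ≤ dist x b0 + dist b0 ξ := dist_triangle _ _ _
    _ ≤ ρ + dist b0 ξ := by gcongr; exact hρ x hx b0 hb0
    _ ≤ K := hK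

lemma exists_escape {X : Type*} [PseudoMetricSpace X] (ξ : X) (s : ℕ → X)
    (hp : ∀ B : Set X, BoundedSet B → (s ⁻¹' B).Finite) :
    ∃ a : ℕ → ℕ, StrictMono a ∧ ∀ k : ℕ, s (a k) ∉ Metric.closedBall ξ (k : ℝ) := by
  have hex : ∀ k m : ℕ, ∃ n, m < n ∧ s n ∉ Metric.closedBall ξ (k : ℝ) := by
    intro k m
    have hfin : ((s ⁻¹' Metric.closedBall ξ (k : ℝ)) ∪ Set.Iic m).Finite :=
      (hp _ (boundedSet_closedBall ξ k)).union (Set.finite_Iic m)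
    obtain ⟨n, hn⟩ := hfin.infinite_compl.nonempty
    simp only [Set.mem_compl_iff, Set.mem_union, Set.mem_preimage, Set.mem_Iic, not_or,
      not_le] at hn
    exact ⟨n, hn.2, hn.1⟩
  choose g hg1 hg2 using hex
  refine ⟨fun k => Nat.rec (g 0 0) (fun k ih => g (k+1) ih) k, ?_, ?_⟩
  · exact strictMono_nat_of_lt_succ fun k => hg1 (k+1) _
  · intro k; cases k with
    | zero => exact hg2 0 0
    | succ k => exact hg2 (k+1) _

lemma chain_clamped {X : Type*} [PseudoMetricSpace X] (ξ : X) {r : ℝ}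
    (hr : ∀ A : Set X, ξ ∈ A → BoundedSet A →
      ∀ x ∈ Aᶜ, ∀ y ∈ Aᶜ, ∃ n : ℕ, ∃ c : ℕ → X, c 0 = x ∧ c n = y ∧
        (∀ i ≤ n, c i ∈ Aᶜ) ∧ (∀ i < n, dist (c i) (c (i + 1)) ≤ r))
    (k : ℕ) (x y : X) (hx : x ∉ Metric.closedBall ξ (k : ℝ))
    (hy : y ∉ Metric.closedBall ξ (k : ℝ)) :
    ∃ n : ℕ, ∃ c : ℕ → X, c 0 = x ∧ (∀ i, n ≤ i → c i = y) ∧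
      (∀ i, c i ∉ Metric.closedBall ξ (k : ℝ)) ∧
      (∀ i, dist (c i) (c (i + 1)) ≤ max 0 r) := by
  have hxi : ξ ∈ Metric.closedBall ξ (k : ℝ) := by
    simp [Metric.mem_closedBall, dist_self]
  obtain ⟨n, c, hc0, hcn, hcm, hcd⟩ :=
    hr (Metric.closedBall ξ (k : ℝ)) hxi (boundedSet_closedBall ξ k) x hx y hy
  refine ⟨n, fun i => c (min i n), by simpa using hc0, fun i hi => ?_, fun i => ?_, fun i => ?_⟩
  · show c (min i n) = y
    rw [min_eq_right hi]; exact hcn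
  · exact hcm _ (min_le_right _ _)

  · show dist (c (min i n)) (c (min (i+1) n)) ≤ max 0 r
    rcases lt_or_ge i n with hlt | hle
    · rw [min_eq_left hlt.le, min_eq_left hlt]
      exact le_trans (hcd i hlt) (le_max_right _ _)
    · rw [min_eq_right hle, min_eq_right (by omega : n ≤ i + 1)]
      simp

end AuxCS

/-- If a pointed pseudometric space is non-scattering at infinity, then any two coarse
sequences are `≡σ`-equivalent; in particular `σ(X,ξ)` is empty or a singleton. -/
theorem nonScattering_sigma_subsingleton {X : Type*} [PseudoMetricSpace X] (ξ : X)
    (h : NonScattering ξ) (s t : ℕ → X) (hs : CoarseSeq s) (ht : CoarseSeq t) :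
    SigmaEquiv s t := by
  classical
  obtain ⟨r0, hr0⟩ := h
  obtain ⟨rs, hrs⟩ := hs.1 1
  obtain ⟨rt, hrt⟩ := ht.1 1
  set R : ℝ := max (max 0 r0) (max rs rt) with hRdef
  have hR0 : (0:ℝ) ≤ R := le_trans (le_max_left 0 r0) (le_max_left _ _)
  have hrsR : rs ≤ R := le_trans (le_max_left _ _) (le_max_right _ _)
  have hrtR : rt ≤ R := le_trans (le_max_right _ _) (le_max_right _ _)
  have hr0R : max 0 r0 ≤ R := le_max_left _ _
  obtain ⟨a, haM, has⟩ := AuxCS.exists_escape ξ s hs.2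
  obtain ⟨b, hbM, hbt⟩ := AuxCS.exists_escape ξ t ht.2
  choose n1 c1 hc10 hc1e hc1m hc1d using
    fun k => AuxCS.chain_clamped ξ hr0 k (s (a k)) (t (b k)) (has k) (hbt k)
  choose n2 c2 hc20 hc2e hc2m hc2d using
    fun k => AuxCS.chain_clamped ξ hr0 k (t (b k)) (s (a k)) (hbt k) (has k)
  set pa : ℕ → ℕ := fun k => if k = 0 then 0 else a (k-1) + 1 with hpaD
  set pb : ℕ → ℕ := fun k => if k = 0 then 0 else b (k-1) + 1 with hpbD
  have hpa_le : ∀ k, pa k ≤ a k := by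
    intro k; cases k with
    | zero => simp [hpaD]
    | succ k =>
        simp only [hpaD, Nat.succ_ne_zero, if_false, Nat.add_sub_cancel]
        exact haM (Nat.lt_succ_self k)
  have hpb_le : ∀ k, pb k ≤ b k := by
    intro k; cases k with
    | zero => simp [hpbD]
    | succ k =>
        simp only [hpbD, Nat.succ_ne_zero, if_false, Nat.add_sub_cancel]
        exact hbM (Nat.lt_succ_self k)
  have hpa_ge : ∀ k, k ≤ pa k := by
    intro k; cases k with
    | zero => simp [hpaD]
    | succ k =>
        simp only [hpaD, Nat.succ_ne_zero, if_false, Nat.add_sub_cancel]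
        have : k ≤ a k := haM.le_apply; omega
  have hpb_ge : ∀ k, k ≤ pb k := by
    intro k; cases k with
    | zero => simp [hpbD]
    | succ k =>
        simp only [hpbD, Nat.succ_ne_zero, if_false, Nat.add_sub_cancel]
        have : k ≤ b k := hbM.le_apply; omega
  have hpaS : ∀ k, pa (k+1) = a k + 1 := by
    intro k; simp [hpaD]
  set m1 : ℕ → ℕ := fun k => a k + 1 - pa k with hm1D
  set m3 : ℕ → ℕ := fun k => b k + 1 - pb k with hm3D
  set len : ℕ → ℕ := fun k => m1 k + (n1 k + 1) + m3 k + m3 k + (n2 k + 1) with hlenD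
  have hm1e : ∀ k, m1 k = a k + 1 - pa k := fun k => by rw [hm1D]
  have hm3e : ∀ k, m3 k = b k + 1 - pb k := fun k => by rw [hm3D]
  have hlene : ∀ k, len k = m1 k + (n1 k + 1) + m3 k + m3 k + (n2 k + 1) := fun k => by
    rw [hlenD]
  have hlen : ∀ k, 0 < len k := fun k => by have := hlene k; omega
  set f : ℕ → ℕ → X := fun k i =>
    if i < m1 k then s (pa k + i)
    else if i < m1 k + (n1 k + 1) then c1 k (i - m1 k)
    else if i < m1 k + (n1 k + 1) + m3 k then t (b k - (i - (m1 k + (n1 k + 1))))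
    else if i < m1 k + (n1 k + 1) + m3 k + m3 k then
      t (pb k + (i - (m1 k + (n1 k + 1) + m3 k)))
    else c2 k (i - (m1 k + (n1 k + 1) + m3 k + m3 k)) with hfD
  set u : ℕ → X := AuxCS.concatSeq len hlen f with huD
  -- step bound within blocks
  have hstep : ∀ k i, i + 1 < len k → dist (f k i) (f k (i+1)) ≤ R := by
    intro k i hi
    have hm1 := hm1e k
    have hm3 := hm3e k
    have hlenk := hlene k
    have hpal := hpa_le k
    have hpbl := hpb_le k
    simp only [hfD]
    by_cases hA : i + 1 < m1 k
    · rw [if_pos (show i < m1 k by omega), if_pos hA]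
      exact le_trans (hrs _ _ (by simp [Nat.dist]; omega)) hrsR
    by_cases hB : i < m1 k
    · rw [if_pos hB, if_neg hA, if_pos (show i + 1 < m1 k + (n1 k + 1) by omega)]
      have e1 : pa k + i = a k := by omega
      have e2 : i + 1 - m1 k = 0 := by omega
      rw [e1, e2, hc10 k, dist_self]; exact hR0
    by_cases hC : i + 1 < m1 k + (n1 k + 1)
    · rw [if_neg hB, if_pos (show i < m1 k + (n1 k + 1) by omega), if_neg hA, if_pos hC]
      have e : i + 1 - m1 k = (i - m1 k) + 1 := by omega
      rw [e]; exact le_trans (hc1d k _) hr0R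
    by_cases hD : i < m1 k + (n1 k + 1)
    · rw [if_neg hB, if_pos hD, if_neg (show ¬ i + 1 < m1 k by omega), if_neg hC,
        if_pos (show i + 1 < m1 k + (n1 k + 1) + m3 k by omega)]
      have e1 : n1 k ≤ i - m1 k := by omega
      have e2 : i + 1 - (m1 k + (n1 k + 1)) = 0 := by omega
      rw [hc1e k _ e1, e2, Nat.sub_zero, dist_self]; exact hR0
    by_cases hE : i + 1 < m1 k + (n1 k + 1) + m3 k
    · rw [if_neg hB, if_neg hD, if_pos (show i < m1 k + (n1 k + 1) + m3 k by omega),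
        if_neg (show ¬ i + 1 < m1 k by omega), if_neg (show ¬ i + 1 < m1 k + (n1 k + 1) by omega),
        if_pos hE]
      exact le_trans (hrt _ _ (by simp [Nat.dist]; omega)) hrtR
    by_cases hF : i < m1 k + (n1 k + 1) + m3 k
    · rw [if_neg hB, if_neg hD, if_pos hF, if_neg (show ¬ i + 1 < m1 k by omega),
        if_neg (show ¬ i + 1 < m1 k + (n1 k + 1) by omega), if_neg hE,
        if_pos (show i + 1 < m1 k + (n1 k + 1) + m3 k + m3 k by omega)]
      have e1 : b k - (i - (m1 k + (n1 k + 1))) = pb k := by omega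
      have e2 : i + 1 - (m1 k + (n1 k + 1) + m3 k) = 0 := by omega
      rw [e1, e2, Nat.add_zero, dist_self]; exact hR0
    by_cases hG : i + 1 < m1 k + (n1 k + 1) + m3 k + m3 k
    · rw [if_neg hB, if_neg hD, if_neg hF,
        if_pos (show i < m1 k + (n1 k + 1) + m3 k + m3 k by omega),
        if_neg (show ¬ i + 1 < m1 k by omega), if_neg (show ¬ i + 1 < m1 k + (n1 k + 1) by omega),
        if_neg (show ¬ i + 1 < m1 k + (n1 k + 1) + m3 k by omega), if_pos hG]
      exact le_trans (hrt _ _ (by simp [Nat.dist]; omega)) hrtR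
    by_cases hH : i < m1 k + (n1 k + 1) + m3 k + m3 k
    · rw [if_neg hB, if_neg hD, if_neg hF, if_pos hH, if_neg (show ¬ i + 1 < m1 k by omega),
        if_neg (show ¬ i + 1 < m1 k + (n1 k + 1) by omega),
        if_neg (show ¬ i + 1 < m1 k + (n1 k + 1) + m3 k by omega), if_neg hG]
      have e1 : pb k + (i - (m1 k + (n1 k + 1) + m3 k)) = b k := by omega
      have e2 : i + 1 - (m1 k + (n1 k + 1) + m3 k + m3 k) = 0 := by omega
      rw [e1, e2, hc20 k, dist_self]; exact hR0
    · rw [if_neg hB, if_neg hD, if_neg hF, if_neg hH, if_neg (show ¬ i + 1 < m1 k by omega),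
        if_neg (show ¬ i + 1 < m1 k + (n1 k + 1) by omega),
        if_neg (show ¬ i + 1 < m1 k + (n1 k + 1) + m3 k by omega),
        if_neg (show ¬ i + 1 < m1 k + (n1 k + 1) + m3 k + m3 k by omega)]
      have e : i + 1 - (m1 k + (n1 k + 1) + m3 k + m3 k)
          = (i - (m1 k + (n1 k + 1) + m3 k + m3 k)) + 1 := by omega
      rw [e]; exact le_trans (hc2d k _) hr0R
  -- junction between blocks
  have hjunc : ∀ k, dist (f k (len k - 1)) (f (k+1) 0) ≤ R := by
    intro k
    have hm1 := hm1e k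
    have hm3 := hm3e k
    have hlenk := hlene k
    have hpal := hpa_le k
    have hpal' := hpa_le (k+1)
    have hm1' := hm1e (k+1)
    have hpaS' := hpaS k
    simp only [hfD]
    rw [if_neg (show ¬ len k - 1 < m1 k by omega),
      if_neg (show ¬ len k - 1 < m1 k + (n1 k + 1) by omega),
      if_neg (show ¬ len k - 1 < m1 k + (n1 k + 1) + m3 k by omega),
      if_neg (show ¬ len k - 1 < m1 k + (n1 k + 1) + m3 k + m3 k by omega),
      if_pos (show (0:ℕ) < m1 (k+1) by omega)]
    have e1 : len k - 1 - (m1 k + (n1 k + 1) + m3 k + m3 k) = n2 k := by omega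
    have e2 : pa (k+1) + 0 = a k + 1 := by omega
    rw [e1, hc2e k _ le_rfl, e2]
    exact le_trans (hrs _ _ (by simp [Nat.dist])) hrsR
  have hud : ∀ m d : ℕ, dist (u m) (u (m+d)) ≤ d * R := by
    intro m d
    rw [huD]
    exact AuxCS.concat_dist len hlen f R hstep hjunc m d
  -- u is a coarse sequence
  have hu : CoarseSeq u := by
    constructor
    · intro k
      refine ⟨k * R, fun m n hmn => ?_⟩
      have key : ∀ p d : ℕ, d ≤ k → dist (u p) (u (p + d)) ≤ k * R := by
        intro p d hd
        refine le_trans (hud p d) ?_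
        exact mul_le_mul_of_nonneg_right (by exact_mod_cast hd) hR0
      rcases le_total m n with hle | hle
      · have e : n = m + (n - m) := by omega
        rw [e]
        exact key m _ (by simp [Nat.dist] at hmn; omega)
      · rw [dist_comm]
        have e : m = n + (m - n) := by omega
        rw [e]
        exact key n _ (by simp [Nat.dist] at hmn; omega)
    · intro B hB
      obtain ⟨K, hK⟩ := AuxCS.bounded_subset_ball ξ B hB
      obtain ⟨Ms, hMs⟩ := (hs.2 B hB).bddAbove
      obtain ⟨Mt, hMt⟩ := (ht.2 B hB).bddAbove
      have hclass : ∀ k i : ℕ, f k i ∉ Metric.closedBall ξ (k:ℝ) ∨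
          (∃ j, k ≤ j ∧ f k i = s j) ∨ (∃ j, k ≤ j ∧ f k i = t j) := by
        intro k i
        have hm1 := hm1e k
        have hm3 := hm3e k
        have hpgl := hpa_ge k
        have hpgb := hpb_ge k
        have hpbl := hpb_le k
        simp only [hfD]
        split_ifs with h1 h2 h3 h4
        · exact Or.inr (Or.inl ⟨pa k + i, by omega, rfl⟩)
        · exact Or.inl (hc1m k _)
        · exact Or.inr (Or.inr ⟨b k - (i - (m1 k + (n1 k + 1))), by omega, rfl⟩)
        · exact Or.inr (Or.inr ⟨pb k + (i - (m1 k + (n1 k + 1) + m3 k)), by omega, rfl⟩)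
        · exact Or.inl (hc2m k _)
      set N := max K (max Ms Mt + 1) with hN
      apply Set.Finite.subset (Set.finite_Iio (AuxCS.off len N))
      intro p hp
      simp only [Set.mem_preimage] at hp
      simp only [Set.mem_Iio]
      by_contra hge
      push_neg at hge
      have hkN : N ≤ AuxCS.stg len hlen p := by
        by_contra hlt
        push_neg at hlt
        have h1 := AuxCS.off_mono len (show AuxCS.stg len hlen p + 1 ≤ N by omega)
        have h2 := AuxCS.stg_lt len hlen p
        omega
      have hup : u p = f (AuxCS.stg len hlen p) (p - AuxCS.off len (AuxCS.stg len hlen p)) := by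
        rw [huD]; rfl
      rw [hup] at hp
      rcases hclass (AuxCS.stg len hlen p) (p - AuxCS.off len (AuxCS.stg len hlen p)) with
        hc | ⟨j, hj, hje⟩ | ⟨j, hj, hje⟩
      · apply hc
        have hKk : (K:ℝ) ≤ (AuxCS.stg len hlen p : ℝ) := by
          have : K ≤ AuxCS.stg len hlen p := le_trans (le_max_left _ _) hkN
          exact_mod_cast this
        exact (hK.trans (Metric.closedBall_subset_closedBall hKk)) hp
      · rw [hje] at hp
        have hjM : j ≤ Ms := hMs hp
        have : max Ms Mt + 1 ≤ AuxCS.stg len hlen p := le_trans (le_max_right _ _) hkN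
        omega
      · rw [hje] at hp
        have hjM : j ≤ Mt := hMt hp
        have : max Ms Mt + 1 ≤ AuxCS.stg len hlen p := le_trans (le_max_right _ _) hkN
        omega
  -- the embedding of s into u
  have hstgSex : ∀ n : ℕ, ∃ k, n ≤ a k := fun n => ⟨n, haM.le_apply⟩
  obtain ⟨stgS, hS1, hSmin⟩ : ∃ g : ℕ → ℕ, (∀ n, n ≤ a (g n)) ∧
      (∀ n k', n ≤ a k' → g n ≤ k') :=
    ⟨fun n => Nat.find (hstgSex n), fun n => Nat.find_spec (hstgSex n),
      fun n k' hk' => Nat.find_le hk'⟩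
  have hS2 : ∀ n, pa (stgS n) ≤ n := by
    intro n
    rcases Nat.eq_zero_or_pos (stgS n) with h0 | h0
    · simp [hpaD, h0]
    · have hna : ¬ n ≤ a (stgS n - 1) := fun hcon => by
        have := hSmin n _ hcon; omega
      have he : pa (stgS n) = a (stgS n - 1) + 1 := by
        simp only [hpaD]; rw [if_neg (by omega)]
      omega
  have hiS : ∀ n, n - pa (stgS n) < m1 (stgS n) := by
    intro n
    have h1 := hS1 n
    have h2 := hS2 n
    have h3 := hpa_le (stgS n)
    have h4 := hm1e (stgS n)
    omega
  have hκsval : ∀ n, u (AuxCS.off len (stgS n) + (n - pa (stgS n))) = s n := by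
    intro n
    have hl : n - pa (stgS n) < len (stgS n) := by
      have := hiS n; have := hlene (stgS n); omega
    rw [huD, AuxCS.concat_eval len hlen f _ _ hl]
    simp only [hfD]
    rw [if_pos (hiS n)]
    congr 1
    have := hS2 n
    omega
  have hκsM : StrictMono (fun n => AuxCS.off len (stgS n) + (n - pa (stgS n))) := by
    apply strictMono_nat_of_lt_succ
    intro n
    show AuxCS.off len (stgS n) + (n - pa (stgS n)) <
      AuxCS.off len (stgS (n+1)) + (n + 1 - pa (stgS (n+1)))
    have hk1 : stgS n ≤ stgS (n+1) := hSmin n _ (le_trans (Nat.le_succ n) (hS1 (n+1)))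
    rcases eq_or_lt_of_le hk1 with he | hlt
    · rw [← he]
      have := hS2 n
      omega
    · have h1 : n - pa (stgS n) < len (stgS n) := by
        have := hiS n; have := hlene (stgS n); omega
      have h2 : AuxCS.off len (stgS n + 1) ≤ AuxCS.off len (stgS (n+1)) := AuxCS.off_mono len hlt
      have h3 : AuxCS.off len (stgS n + 1) = AuxCS.off len (stgS n) + len (stgS n) := rfl
      omega
  -- the embedding of t into u
  have hstgTex : ∀ n : ℕ, ∃ k, n ≤ b k := fun n => ⟨n, hbM.le_apply⟩
  obtain ⟨stgT, hT1, hTmin⟩ : ∃ g : ℕ → ℕ, (∀ n, n ≤ b (g n)) ∧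
      (∀ n k', n ≤ b k' → g n ≤ k') :=
    ⟨fun n => Nat.find (hstgTex n), fun n => Nat.find_spec (hstgTex n),
      fun n k' hk' => Nat.find_le hk'⟩
  have hT2 : ∀ n, pb (stgT n) ≤ n := by
    intro n
    rcases Nat.eq_zero_or_pos (stgT n) with h0 | h0
    · simp [hpbD, h0]
    · have hna : ¬ n ≤ b (stgT n - 1) := fun hcon => by
        have := hTmin n _ hcon; omega
      have he : pb (stgT n) = b (stgT n - 1) + 1 := by
        simp only [hpbD]; rw [if_neg (by omega)]
      omega
  have hiT : ∀ n, n - pb (stgT n) < m3 (stgT n) := by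
    intro n
    have h1 := hT1 n
    have h2 := hT2 n
    have h3 := hpb_le (stgT n)
    have h4 := hm3e (stgT n)
    omega
  have hκtval : ∀ n, u (AuxCS.off len (stgT n) +
      (m1 (stgT n) + (n1 (stgT n) + 1) + m3 (stgT n) + (n - pb (stgT n)))) = t n := by
    intro n
    have hl : m1 (stgT n) + (n1 (stgT n) + 1) + m3 (stgT n) + (n - pb (stgT n))
        < len (stgT n) := by
      have := hiT n; have := hlene (stgT n); omega
    rw [huD, AuxCS.concat_eval len hlen f _ _ hl]
    simp only [hfD]
    have := hiT n
    rw [if_neg (by omega), if_neg (by omega), if_neg (by omega), if_pos (by omega)]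
    congr 1
    have := hT2 n
    omega
  have hκtM : StrictMono (fun n => AuxCS.off len (stgT n) +
      (m1 (stgT n) + (n1 (stgT n) + 1) + m3 (stgT n) + (n - pb (stgT n)))) := by
    apply strictMono_nat_of_lt_succ
    intro n
    show AuxCS.off len (stgT n) +
        (m1 (stgT n) + (n1 (stgT n) + 1) + m3 (stgT n) + (n - pb (stgT n))) <
      AuxCS.off len (stgT (n+1)) +
        (m1 (stgT (n+1)) + (n1 (stgT (n+1)) + 1) + m3 (stgT (n+1)) + (n + 1 - pb (stgT (n+1))))
    have hk1 : stgT n ≤ stgT (n+1) := hTmin n _ (le_trans (Nat.le_succ n) (hT1 (n+1)))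
    rcases eq_or_lt_of_le hk1 with he | hlt
    · rw [← he]
      have := hT2 n
      omega
    · have h1 : m1 (stgT n) + (n1 (stgT n) + 1) + m3 (stgT n) + (n - pb (stgT n))
          < len (stgT n) := by
        have := hiT n; have := hlene (stgT n); omega
      have h2 : AuxCS.off len (stgT n + 1) ≤ AuxCS.off len (stgT (n+1)) := AuxCS.off_mono len hlt
      have h3 : AuxCS.off len (stgT n + 1) = AuxCS.off len (stgT n) + len (stgT n) := rfl
      omega
  have hsubS : SubCoarse s u :=
    ⟨hs, hu, fun n => AuxCS.off len (stgS n) + (n - pa (stgS n)), hκsM,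
      funext fun n => (hκsval n).symm⟩
  have hsubT : SubCoarse t u :=
    ⟨ht, hu, fun n => AuxCS.off len (stgT n) +
      (m1 (stgT n) + (n1 (stgT n) + 1) + m3 (stgT n) + (n - pb (stgT n))), hκtM,
      funext fun n => (hκtval n).symm⟩
  exact Relation.EqvGen.trans s u t (Relation.EqvGen.rel s u hsubS)
    (Relation.EqvGen.symm t u (Relation.EqvGen.rel t u hsubT))
end

section
/- Let (X, ξ) be a pointed pseudometric space that is non-scattering at infinity and unbounded from ξ (for every r : ℝ there exists x : X with d x ξ > r). Then there exists a coarse sequence on X. -/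
open Filter

/-- Concatenating chains that go further and further from the base point yields
a coarse sequence. -/
lemma exists_coarseSeq_of_chains {X : Type*} [PseudoMetricSpace X] (ξ : X) (r : ℝ)
    (hr0 : 0 ≤ r) (n : ℕ → ℕ) (hn : ∀ k, 1 ≤ n k) (c : ℕ → ℕ → X)
    (hlink : ∀ k, c k (n k) = c (k + 1) 0)
    (hfar : ∀ k, ∀ i ≤ n k, (k : ℝ) < dist (c k i) ξ)
    (hstep : ∀ k, ∀ i < n k, dist (c k i) (c k (i + 1)) ≤ r) :
    ∃ s : ℕ → X, CoarseSeq s := by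
  classical
  set N : ℕ → ℕ := fun k => ∑ i ∈ Finset.range k, n i with hNdef
  have hN0 : N 0 = 0 := by simp [hNdef]
  have hNsucc : ∀ k, N (k + 1) = N k + n k := fun k => by
    simp [hNdef, Finset.sum_range_succ]
  have hNge : ∀ k, k ≤ N k := by
    intro k
    induction k with
    | zero => simp [hN0]
    | succ k ih => have := hn k; rw [hNsucc]; omega
  have hNmono : Monotone N := monotone_nat_of_le_succ fun k => by rw [hNsucc]; omega
  set b : ℕ → ℕ := fun m => Nat.findGreatest (fun k => N k ≤ m) m with hbdef
  have hbN : ∀ m, N (b m) ≤ m := by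
    intro m
    exact Nat.findGreatest_spec (P := fun k => N k ≤ m) (Nat.zero_le m) (by simp [hN0])
  have hblt : ∀ m, m < N (b m + 1) := by
    intro m
    by_contra hcon
    push_neg at hcon
    have h1 : b m + 1 ≤ m := le_trans (hNge _) hcon
    exact Nat.findGreatest_is_greatest (P := fun k => N k ≤ m) (Nat.lt_succ_self _) h1 hcon
  have hble : ∀ k m, N k ≤ m → k ≤ b m := fun k m hkm =>
    Nat.le_findGreatest (le_trans (hNge k) hkm) hkm
  have hbuniq : ∀ k m, N k ≤ m → m < N (k + 1) → b m = k := by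
    intro k m h1 h2
    have hk := hble k m h1
    rcases Nat.lt_or_ge k (b m) with hlt | hge
    · have h3 : N (k + 1) ≤ N (b m) := hNmono (by omega : k + 1 ≤ b m)
      have h4 := hbN m
      omega
    · omega
  set s : ℕ → X := fun m => c (b m) (m - N (b m)) with hsdef
  have hidx : ∀ m, m - N (b m) < n (b m) := by
    intro m
    have h1 := hbN m
    have h2 := hblt m
    rw [hNsucc] at h2
    omega
  have hL : ∀ k j, j ≤ n k → s (N k + j) = c k j := by
    intro k j hj
    rcases lt_or_eq_of_le hj with hj' | hj'
    · have hb1 : b (N k + j) = k :=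
        hbuniq k (N k + j) (Nat.le_add_right _ _) (by rw [hNsucc]; omega)
      simp [hsdef, hb1]
    · subst hj'
      have h2 : N k + n k = N (k + 1) := (hNsucc k).symm
      have hb1 : b (N (k + 1)) = k + 1 := by
        refine hbuniq (k + 1) _ le_rfl ?_
        have h3 := hNsucc (k + 1)
        have h4 := hn (k + 1)
        omega
      rw [h2]
      show c (b (N (k + 1))) (N (k + 1) - N (b (N (k + 1)))) = c k (n k)
      rw [hb1, Nat.sub_self, ← hlink]
  have hsm : ∀ m, s m = c (b m) (m - N (b m)) := fun m => rfl
  have hstep' : ∀ m, dist (s m) (s (m + 1)) ≤ r := by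
    intro m
    have h1 := hbN m
    have h2 := hidx m
    have hm : m = N (b m) + (m - N (b m)) := by omega
    have e1 : s m = c (b m) (m - N (b m)) := rfl
    have e2 : s (m + 1) = c (b m) (m - N (b m) + 1) := by
      have : m + 1 = N (b m) + (m - N (b m) + 1) := by omega
      rw [this, hL _ _ (by omega)]
    rw [e1, e2]
    exact hstep _ _ h2
  have hfar' : ∀ m, (b m : ℝ) < dist (s m) ξ := fun m =>
    hfar (b m) _ (le_of_lt (hidx m))
  have hkey : ∀ m j, dist (s m) (s (m + j)) ≤ r * j := by
    intro m j
    induction j with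
    | zero => simp
    | succ j ih =>
        have h3 : dist (s m) (s (m + j + 1)) ≤ dist (s m) (s (m + j)) + dist (s (m + j)) (s (m + j + 1)) :=
          dist_triangle _ _ _
        have h4 := hstep' (m + j)
        have : m + (j + 1) = m + j + 1 := by omega
        rw [this]
        push_cast
        nlinarith
  refine ⟨s, ?_, ?_⟩
  · intro k
    refine ⟨r * k, ?_⟩
    intro m m' hd
    rcases le_total m m' with hle | hle
    · have hjk : m' - m ≤ k := by simp [Nat.dist] at hd; omega
      have h1 := hkey m (m' - m)
      have h2 : m + (m' - m) = m' := by omega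
      rw [h2] at h1
      have h3 : ((m' - m : ℕ) : ℝ) ≤ (k : ℝ) := by exact_mod_cast hjk
      calc dist (s m) (s m') ≤ r * ((m' - m : ℕ) : ℝ) := h1
        _ ≤ r * k := mul_le_mul_of_nonneg_left h3 hr0
    · have hjk : m - m' ≤ k := by simp [Nat.dist] at hd; omega
      have h1 := hkey m' (m - m')
      have h2 : m' + (m - m') = m := by omega
      rw [h2] at h1
      have h3 : ((m - m' : ℕ) : ℝ) ≤ (k : ℝ) := by exact_mod_cast hjk
      rw [dist_comm]
      calc dist (s m') (s m) ≤ r * ((m - m' : ℕ) : ℝ) := h1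
        _ ≤ r * k := mul_le_mul_of_nonneg_left h3 hr0
  · intro B hB
    rcases Set.eq_empty_or_nonempty (s ⁻¹' B) with he | ⟨m0, hm0⟩
    · simp [he]
    · obtain ⟨R, hR⟩ := hB
      obtain ⟨K, hK⟩ := exists_nat_ge (R + dist (s m0) ξ)
      apply Set.Finite.subset (Set.finite_Iio (N K))
      intro m hm
      by_contra hcon
      simp only [Set.mem_Iio, not_lt] at hcon
      have h5 : (K : ℝ) ≤ b m := by exact_mod_cast hble K m hcon
      have h6 : dist (s m) ξ ≤ dist (s m) (s m0) + dist (s m0) ξ := dist_triangle _ _ _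
      have h7 : dist (s m) (s m0) ≤ R := hR _ hm _ hm0
      have h8 := hfar' m
      linarith

/-- A pointed pseudometric space which is non-scattering at infinity and unbounded from
the base point admits a coarse sequence. -/
theorem nonScattering_unbounded_exists_coarseSeq {X : Type*} [PseudoMetricSpace X] (ξ : X)
    (h : NonScattering ξ) (hu : ∀ r : ℝ, ∃ x : X, r < dist x ξ) :
    ∃ s : ℕ → X, CoarseSeq s := by
  classical
  obtain ⟨r₀, hr⟩ := h
  set r : ℝ := max r₀ 0 with hrdef
  have hr0 : (0 : ℝ) ≤ r := le_max_right _ _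
  choose x hx using fun k : ℕ => hu (k : ℝ)
  have hchain : ∀ k : ℕ, ∃ (m : ℕ) (c : ℕ → X), 1 ≤ m ∧ c 0 = x k ∧ c m = x (k + 1) ∧
      (∀ i ≤ m, (k : ℝ) < dist (c i) ξ) ∧ (∀ i < m, dist (c i) (c (i + 1)) ≤ r) := by
    intro k
    set A : Set X := {y : X | dist y ξ ≤ (k : ℝ)} with hAdef
    have hξA : ξ ∈ A := by simp [hAdef]
    have hAb : BoundedSet A := by
      refine ⟨2 * k, fun a ha b hb => ?_⟩
      simp only [hAdef, Set.mem_setOf_eq] at ha hb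
      calc dist a b ≤ dist a ξ + dist ξ b := dist_triangle _ _ _
        _ ≤ k + k := add_le_add ha (by rw [dist_comm]; exact hb)
        _ = 2 * k := by ring
    have hx1 : x k ∈ Aᶜ := by
      simp only [hAdef, Set.mem_compl_iff, Set.mem_setOf_eq, not_le]
      exact hx k
    have hx2 : x (k + 1) ∈ Aᶜ := by
      simp only [hAdef, Set.mem_compl_iff, Set.mem_setOf_eq, not_le]
      have := hx (k + 1)
      push_cast at this ⊢
      linarith
    obtain ⟨m, c, hc0, hcm, hmem, hst⟩ := hr A hξA hAb _ hx1 _ hx2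
    refine ⟨m + 1, fun i => if i = 0 then x k else c (i - 1), by omega, by simp, ?_, ?_, ?_⟩
    · simp [hcm]
    · intro i hi
      by_cases hi0 : i = 0
      · simpa [hi0] using hx k
      · have := hmem (i - 1) (by omega)
        simp only [Set.mem_compl_iff, hAdef, Set.mem_setOf_eq, not_le] at this
        simpa [hi0] using this
    · intro i hi
      by_cases hi0 : i = 0
      · simp [hi0, hc0, hr0]
      · have h1 : dist (c (i - 1)) (c (i - 1 + 1)) ≤ r₀ := hst (i - 1) (by omega)
        have h2 : i - 1 + 1 = i := by omega
        rw [h2] at h1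
        have : r₀ ≤ r := le_max_left _ _
        simpa [hi0] using le_trans h1 this
  choose n c hn hc0 hcn hfar hstep using hchain
  have hlink : ∀ k, c k (n k) = c (k + 1) 0 := fun k => by rw [hcn k, hc0 (k + 1)]
  exact exists_coarseSeq_of_chains ξ r hr0 n hn c hlink hfar hstep
end

section
/- Consider the plane X = ℝ × ℝ with its product (max) metric and base point (0,0). Then any two points x, y ∈ INF(ℝ × ℝ, (0,0)) satisfy x ≡ι y; that is, INF(ℝ × ℝ, (0,0)) is macrochain-connected, so ι(ℝ²) is a singleton. -/
open Filter

noncomputable def seg (u M : ℝ) (i : ℕ) : ℝ := min (u + i) M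

lemma seg_zero {u M : ℝ} (h : u ≤ M) : seg u M 0 = u := by
  simp [seg, min_eq_left h]

lemma seg_top {u M : ℝ} {i : ℕ} (h : ⌈M - u⌉₊ ≤ i) : seg u M i = M := by
  have h1 : M - u ≤ (⌈M - u⌉₊ : ℝ) := Nat.le_ceil _
  have h2 : (⌈M - u⌉₊ : ℝ) ≤ (i : ℝ) := by exact_mod_cast h
  exact min_eq_right (by linarith)

lemma seg_le {u M : ℝ} (i : ℕ) : seg u M i ≤ M := min_le_right _ _

lemma seg_ge {u M : ℝ} (h : u ≤ M) (i : ℕ) : u ≤ seg u M i :=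
  le_min (by simp) h

lemma seg_step {u M : ℝ} (i : ℕ) : |seg u M (i + 1) - seg u M i| ≤ 1 := by
  have a1 : seg u M i ≤ seg u M (i + 1) := by
    apply min_le_min _ le_rfl
    push_cast; linarith
  have a2 : seg u M (i + 1) ≤ seg u M i + 1 := by
    rcases le_total (u + i) M with h | h
    · have h0 : seg u M i = u + i := min_eq_left h
      have : seg u M (i + 1) ≤ u + (i + 1 : ℕ) := min_le_left _ _
      push_cast at this ⊢
      linarith
    · have h0 : seg u M i = M := min_eq_right h
      have : seg u M (i + 1) ≤ M := min_le_right _ _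
      linarith
  rw [abs_le]; constructor <;> linarith

/-- Path from `(u, v)` to `(M, M)`: first move second coordinate up to `M`,
then the first. -/
noncomputable def halfPath (u v M : ℝ) (i : ℕ) : ℝ × ℝ :=
  if i ≤ ⌈M - v⌉₊ then (u, seg v M i) else (seg u M (i - ⌈M - v⌉₊), M)

lemma halfPath_zero {u v M : ℝ} (hv : v ≤ M) : halfPath u v M 0 = (u, v) := by
  simp [halfPath, seg_zero hv]

lemma halfPath_top {u v M : ℝ} (hu : u ≤ M) {i : ℕ}
    (h : ⌈M - v⌉₊ + ⌈M - u⌉₊ ≤ i) : halfPath u v M i = (M, M) := by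
  unfold halfPath
  split_ifs with hi
  · have h2 : ⌈M - u⌉₊ = 0 := by omega
    have : M ≤ u := by
      have := Nat.ceil_eq_zero.mp h2; linarith
    have hu' : u = M := le_antisymm hu this
    rw [hu', seg_top (by omega)]
  · rw [seg_top (by omega)]

lemma halfPath_norm {u v M : ℝ} (hM : 0 ≤ M) (i : ℕ) :
    min |u| M ≤ max |(halfPath u v M i).1| |(halfPath u v M i).2| := by
  unfold halfPath
  split_ifs with hi
  · exact le_trans (min_le_left _ _) (le_max_left _ _)
  · refine le_trans (min_le_right _ _) (le_trans ?_ (le_max_right _ _))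
    simp [abs_of_nonneg hM]

lemma halfPath_step {u v M : ℝ} (hu : u ≤ M) (i : ℕ) :
    dist (halfPath u v M i) (halfPath u v M (i + 1)) ≤ 1 := by
  rw [Prod.dist_eq]
  unfold halfPath
  rcases le_or_gt (i + 1) ⌈M - v⌉₊ with h1 | h1
  · rw [if_pos (by omega), if_pos h1]
    simp only [Real.dist_eq]
    refine max_le (by simp) ?_
    rw [abs_sub_comm]; exact seg_step i
  · rcases le_or_gt i ⌈M - v⌉₊ with h2 | h2
    · -- i = ⌈M - v⌉₊, junction
      have hi : i = ⌈M - v⌉₊ := by omega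
      rw [if_pos h2, if_neg (by omega)]
      have e1 : seg v M i = M := seg_top (by omega)
      have e2 : i + 1 - ⌈M - v⌉₊ = 1 := by omega
      rw [e1, e2]
      simp only [Real.dist_eq]
      refine max_le ?_ (by simp)
      have g1 : u ≤ seg u M 1 := seg_ge hu 1
      have g2 : seg u M 1 ≤ u + 1 := by
        refine le_trans (min_le_left _ _) ?_; push_cast; linarith
      rw [abs_sub_comm, abs_le]; constructor <;> linarith
    · rw [if_neg (by omega), if_neg (by omega)]
      have e : i + 1 - ⌈M - v⌉₊ = (i - ⌈M - v⌉₊) + 1 := by omega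
      rw [e]
      simp only [Real.dist_eq]
      refine max_le ?_ (by simp)
      rw [abs_sub_comm]; exact seg_step _

/-- Path from `p` to the corner `(M, M)` staying at sup-norm `≥ ‖p‖∞`. -/
noncomputable def cornerPath (p : ℝ × ℝ) (M : ℝ) (i : ℕ) : ℝ × ℝ :=
  if |p.2| ≤ |p.1| then halfPath p.1 p.2 M i else (halfPath p.2 p.1 M i).swap

noncomputable def cornerLen (p : ℝ × ℝ) (M : ℝ) : ℕ := ⌈M - p.1⌉₊ + ⌈M - p.2⌉₊

lemma cornerPath_zero {p : ℝ × ℝ} {M : ℝ} (h1 : p.1 ≤ M) (h2 : p.2 ≤ M) :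
    cornerPath p M 0 = p := by
  unfold cornerPath
  split_ifs
  · rw [halfPath_zero h2]
  · rw [halfPath_zero h1]; rfl

lemma cornerPath_top {p : ℝ × ℝ} {M : ℝ} (h1 : p.1 ≤ M) (h2 : p.2 ≤ M) {i : ℕ}
    (h : cornerLen p M ≤ i) : cornerPath p M i = (M, M) := by
  unfold cornerPath
  unfold cornerLen at h
  split_ifs
  · exact halfPath_top h1 (by omega)
  · rw [halfPath_top h2 (by omega)]; rfl

lemma cornerPath_norm {p : ℝ × ℝ} {M : ℝ} (hp : max |p.1| |p.2| ≤ M) (i : ℕ) :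
    max |p.1| |p.2| ≤ max |(cornerPath p M i).1| |(cornerPath p M i).2| := by
  have hM : 0 ≤ M := le_trans (le_trans (abs_nonneg p.1) (le_max_left _ _)) hp
  unfold cornerPath
  split_ifs with h
  · have e : max |p.1| |p.2| = |p.1| := max_eq_left h
    rw [e]
    refine le_trans ?_ (halfPath_norm hM i)
    exact le_min le_rfl (e ▸ hp)
  · have e : max |p.1| |p.2| = |p.2| := max_eq_right (le_of_lt (not_le.mp h))
    rw [e, Prod.fst_swap, Prod.snd_swap, max_comm]
    refine le_trans ?_ (halfPath_norm hM i)
    exact le_min le_rfl (e ▸ hp)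

lemma dist_swap (x y : ℝ × ℝ) : dist x.swap y.swap = dist x y := by
  rw [Prod.dist_eq, Prod.dist_eq, Prod.fst_swap, Prod.snd_swap, Prod.fst_swap,
    Prod.snd_swap, max_comm]

lemma cornerPath_step {p : ℝ × ℝ} {M : ℝ} (h1 : p.1 ≤ M) (h2 : p.2 ≤ M) (i : ℕ) :
    dist (cornerPath p M i) (cornerPath p M (i + 1)) ≤ 1 := by
  unfold cornerPath
  split_ifs
  · exact halfPath_step h1 i
  · rw [dist_swap]; exact halfPath_step h2 i

/-- The common corner level for the chain joining `p` and `q`. -/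
noncomputable def chainM (p q : ℝ × ℝ) : ℝ := max (max |p.1| |p.2|) (max |q.1| |q.2|)

/-- Chain from `p` to `q` through the corner `(M, M)`. -/
noncomputable def chainPath (p q : ℝ × ℝ) (i : ℕ) : ℝ × ℝ :=
  if i < cornerLen p (chainM p q) then cornerPath p (chainM p q) i
  else cornerPath q (chainM p q) (cornerLen q (chainM p q) - (i - cornerLen p (chainM p q)))

noncomputable def chainLen (p q : ℝ × ℝ) : ℕ :=
  cornerLen p (chainM p q) + cornerLen q (chainM p q)

lemma chainM_p1 (p q : ℝ × ℝ) : p.1 ≤ chainM p q :=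
  le_trans (le_abs_self _) (le_trans (le_max_left _ _) (le_max_left _ _))
lemma chainM_p2 (p q : ℝ × ℝ) : p.2 ≤ chainM p q :=
  le_trans (le_abs_self _) (le_trans (le_max_right _ _) (le_max_left _ _))
lemma chainM_q1 (p q : ℝ × ℝ) : q.1 ≤ chainM p q :=
  le_trans (le_abs_self _) (le_trans (le_max_left _ _) (le_max_right _ _))
lemma chainM_q2 (p q : ℝ × ℝ) : q.2 ≤ chainM p q :=
  le_trans (le_abs_self _) (le_trans (le_max_right _ _) (le_max_right _ _))

lemma chainPath_zero (p q : ℝ × ℝ) : chainPath p q 0 = p := by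
  unfold chainPath
  split_ifs with h
  · exact cornerPath_zero (chainM_p1 p q) (chainM_p2 p q)
  · -- cornerLen p M = 0, so p = (M, M)
    have h0 : cornerLen p (chainM p q) = 0 := by omega
    unfold cornerLen at h0
    have e1 : chainM p q ≤ p.1 := by
      have := Nat.ceil_eq_zero.mp (by omega : ⌈chainM p q - p.1⌉₊ = 0); linarith
    have e2 : chainM p q ≤ p.2 := by
      have := Nat.ceil_eq_zero.mp (by omega : ⌈chainM p q - p.2⌉₊ = 0); linarith
    have hp1 : p.1 = chainM p q := le_antisymm (chainM_p1 p q) e1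
    have hp2 : p.2 = chainM p q := le_antisymm (chainM_p2 p q) e2
    have e : cornerLen q (chainM p q) - (0 - cornerLen p (chainM p q)) = cornerLen q (chainM p q) := by omega
    rw [e, cornerPath_top (chainM_q1 p q) (chainM_q2 p q) le_rfl]
    exact Prod.ext hp1.symm hp2.symm

lemma chainPath_top (p q : ℝ × ℝ) : chainPath p q (chainLen p q) = q := by
  unfold chainPath chainLen
  rw [if_neg (by omega)]
  have e : cornerLen q (chainM p q) -
      (cornerLen p (chainM p q) + cornerLen q (chainM p q) - cornerLen p (chainM p q)) = 0 := by
    omega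
  rw [e]
  exact cornerPath_zero (chainM_q1 p q) (chainM_q2 p q)

lemma chainPath_norm (p q : ℝ × ℝ) (i : ℕ) :
    min (max |p.1| |p.2|) (max |q.1| |q.2|) ≤
      max |(chainPath p q i).1| |(chainPath p q i).2| := by
  unfold chainPath
  split_ifs
  · exact le_trans (min_le_left _ _) (cornerPath_norm (le_max_left _ _) i)
  · exact le_trans (min_le_right _ _) (cornerPath_norm (le_max_right _ _) _)

lemma chainPath_step (p q : ℝ × ℝ) (i : ℕ) :
    dist (chainPath p q i) (chainPath p q (i + 1)) ≤ 1 := by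
  set M := chainM p q with hM
  set Np := cornerLen p M with hNp
  set Nq := cornerLen q M with hNq
  unfold chainPath
  rw [← hM, ← hNp, ← hNq]
  rcases lt_trichotomy (i + 1) Np with h1 | h1 | h1
  · rw [if_pos (by omega), if_pos h1]
    exact cornerPath_step (chainM_p1 p q) (chainM_p2 p q) i
  · rw [if_pos (by omega), if_neg (by omega)]
    have e : Nq - (i + 1 - Np) = Nq := by omega
    rw [e, cornerPath_top (chainM_q1 p q) (chainM_q2 p q) le_rfl,
      ← cornerPath_top (chainM_p1 p q) (chainM_p2 p q) (le_of_eq h1.symm)]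
    exact cornerPath_step (chainM_p1 p q) (chainM_p2 p q) i
  · rw [if_neg (by omega), if_neg (by omega)]
    rcases le_or_gt Nq (i - Np) with h2 | h2
    · have e : Nq - (i - Np) = Nq - (i + 1 - Np) := by omega
      rw [e]; simp
    · have e : Nq - (i - Np) = (Nq - (i + 1 - Np)) + 1 := by omega
      rw [e, dist_comm]
      exact cornerPath_step (chainM_q1 p q) (chainM_q2 p q) _

lemma dist_zero_pair (c : ℝ × ℝ) : dist c ((0, 0) : ℝ × ℝ) = max |c.1| |c.2| := by
  rw [Prod.dist_eq]; simp [Real.dist_eq]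


/-- For the plane `ℝ × ℝ` (max metric) with base point `(0,0)`, the set of infinite
points is macrochain-connected, so `ι(ℝ²)` is a singleton. -/
theorem iota_plane : MacroChainConnected (INF ((0, 0) : ℝ × ℝ)) := by
  intro x hx y hy
  revert hx hy
  induction x using Filter.Germ.inductionOn with
  | h a =>
  induction y using Filter.Germ.inductionOn with
  | h b =>
  intro hx hy
  refine ⟨fun n => chainLen (a n) (b n), fun n i => chainPath (a n) (b n) i, ?_, ?_, ?_, ?_⟩
  · have h : (fun n => chainPath (a n) (b n) 0) = a := funext fun n => chainPath_zero _ _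
    rw [h]
  · have h : (fun n => chainPath (a n) (b n) (chainLen (a n) (b n))) = b :=
      funext fun n => chainPath_top _ _
    rw [h]
  · intro g _ hfc
    obtain ⟨r, hr⟩ := hfc
    have hr' : ∀ᶠ n in (↑(hyperfilter ℕ) : Filter ℕ),
        dist (chainPath (a n) (b n) (g n)) ((0, 0) : ℝ × ℝ) ≤ r := Filter.Germ.coe_le.mp hr
    have hor : ∀ᶠ n in (↑(hyperfilter ℕ) : Filter ℕ),
        dist (a n) ((0, 0) : ℝ × ℝ) ≤ r ∨ dist (b n) ((0, 0) : ℝ × ℝ) ≤ r := by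
      refine hr'.mono fun n hn => ?_
      have hb := chainPath_norm (a n) (b n) (g n)
      rw [dist_zero_pair] at hn
      rw [dist_zero_pair, dist_zero_pair]
      exact min_le_iff.mp (le_trans hb hn)
    rcases (Ultrafilter.eventually_or).mp hor with hl | hl
    · exact hx ⟨r, Filter.Germ.coe_le.mpr hl⟩
    · exact hy ⟨r, Filter.Germ.coe_le.mpr hl⟩
  · intro g _
    exact ⟨1, Filter.Germ.coe_le.mpr (Filter.Eventually.of_forall
      fun n => chainPath_step (a n) (b n) (g n))⟩
end
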